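/- arXiv:2102.10517 — 7 statements merged into one kernel-verified Lean document; each statement's English description precedes it below -/
import Mathlib

section
/- For every prime p, every integer m ≥ 1, every positive integer q, every permutation π of {1,…,m}, all coefficients c_1,…,c_m ∈ Z_λ and constant c ∈ Z_λ (where λ = lcm(p,q)), the family of codes {C_t^p : t = 0,1,…,p−1} forms a (p,p,p^m)-CCC; explicitly, for all t,t' ∈ {0,…,p−1} and all integers u with |u| < p^m: C(C_t^p, C_{t'}^p)(u) = p^{m+1} if u = 0 and t = t'; C(C_t^p, C_{t'}^p)(u) = 0 if 0 < |u| < p^m and t = t'; and C(C_t^p, C_{t'}^p)(u) = 0 for all |u| < p^m if t ≠ t'. -/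
open Finset

/-- `ω_λ = exp(2π√(-1)/λ)`. -/
noncomputable def omg (lam : ℕ) : ℂ := Complex.exp (2 * Real.pi * Complex.I / lam)

/-- Aperiodic cross-correlation of two length-`L` complex sequences at shift `u`. -/
noncomputable def aCorr (L : ℕ) (a b : ℕ → ℂ) (u : ℤ) : ℂ :=
  if 0 ≤ u then
    ∑ i ∈ Finset.range (L - u.toNat), a (i + u.toNat) * (starRingEnd ℂ) (b i)
  else
    ∑ i ∈ Finset.range (L - (-u).toNat), a i * (starRingEnd ℂ) (b (i + (-u).toNat))

/-- Cross-correlation sum of two `M × L` codes (matrices given row-wise). -/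
noncomputable def codeCorr (M L : ℕ) (C D : ℕ → ℕ → ℂ) (u : ℤ) : ℂ :=
  ∑ ν ∈ Finset.range M, aCorr L (C ν) (D ν) u

/-- Base-`p` digit vector of `γ` (digit `j` is `γ / p^j % p`). -/
def dig (p m γ : ℕ) : Fin m → ℕ := fun j => γ / p ^ (j : ℕ) % p

/-- The quadratic multivariable function
`f(v) = (λ/p)·Σ_{β=1}^{m-1} v_{π(β)} v_{π(β+1)} + Σ_{β=1}^{m} c_β v_β` (as an integer). -/
def fQuad (p m lam : ℕ) (π : Equiv.Perm (Fin m)) (cf : Fin m → ZMod lam)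
    (v : Fin m → ℕ) : ℤ :=
  ((lam / p : ℕ) : ℤ) * ∑ β : Fin (m - 1),
      (v (π (Fin.castLE (Nat.sub_le m 1) β)) : ℤ) *
        (v (π ⟨(β : ℕ) + 1, by have := β.isLt; omega⟩) : ℤ)
    + ∑ β : Fin m, ((cf β).val : ℤ) * (v β : ℤ)

/-- `a_t^α(v) = f(v) + (λ/p)·α·v_{π(1)} + (λ/p)·t·v_{π(m)} + c` (as an integer). -/
def aFun (p m lam : ℕ) (hm : 0 < m) (π : Equiv.Perm (Fin m)) (cf : Fin m → ZMod lam)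
    (c : ZMod lam) (t α : ℕ) (v : Fin m → ℕ) : ℤ :=
  fQuad p m lam π cf v
    + ((lam / p : ℕ) : ℤ) * (α : ℤ) * (v (π ⟨0, hm⟩) : ℤ)
    + ((lam / p : ℕ) : ℤ) * (t : ℤ) * (v (π ⟨m - 1, by omega⟩) : ℤ)
    + ((c.val : ℕ) : ℤ)

/-- The code `C_t^p`: the `p × p^m` matrix whose `α`-th row is `ψ(a_t^α)`. -/
noncomputable def codeC (p m lam : ℕ) (hm : 0 < m) (π : Equiv.Perm (Fin m))
    (cf : Fin m → ZMod lam) (c : ZMod lam) (t : ℕ) : ℕ → ℕ → ℂ :=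
  fun α γ => omg lam ^ (aFun p m lam hm π cf c t α (dig p m γ))

/-!
Summing over the `p` rows `α` kills every pair of positions `(i + u, i)` whose digits at
`π(1)` differ, because `α` enters the exponent only through `(λ/p)·α·v_{π(1)}`. For `u = 0` and
`t ≠ t'` the remaining sum over `i` cancels as the digit at `π(m)` runs through `0, …, p-1`.
For `u > 0`, let `b` be the first path index at which the digits of `i + u` and `i` differ
(`b ≥ 2`, as they agree at `π(1)`). Changing the digit at `π(b-1)` of both `i` and `i + u` to
`d` causes no carry, since these digits agree, and changes the exponent by
`(λ/p)·(d - y_{π(b-1)})·(x_{π(b)} - y_{π(b)})`, where `x` and `y` are the digit vectors of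
`i + u` and `i`; the sum over `d` is then a full sum of `p`-th roots of unity. Negative shifts
follow by conjugate symmetry.
-/

namespace GolayCCC

def digit (p k n : ℕ) : ℕ := n / p ^ k % p

def replaceDigit (p k d n : ℕ) : ℕ := n % p ^ k + d * p ^ k + n / p ^ (k + 1) * p ^ (k + 1)

section Digits

variable {p : ℕ}

lemma digit_lt (hp : 0 < p) (k n : ℕ) : digit p k n < p := Nat.mod_lt _ hp

lemma replaceDigit_digit_self (k n : ℕ) : replaceDigit p k (digit p k n) n = n := by
  have h1 := Nat.div_add_mod n (p ^ k)
  have h2 := Nat.div_add_mod (n / p ^ k) p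
  rw [Nat.div_div_eq_div_mul, ← pow_succ] at h2
  unfold replaceDigit digit
  conv_rhs => rw [← h1, ← h2]
  ring

lemma replaceDigit_div_pow_succ (hp : 0 < p) {d : ℕ} (hd : d < p) (k n : ℕ) :
    replaceDigit p k d n / p ^ (k + 1) = n / p ^ (k + 1) := by
  have hlow : n % p ^ k + d * p ^ k < p ^ (k + 1) := by
    have := Nat.mod_lt n (pow_pos hp k)
    rw [pow_succ]; nlinarith [Nat.mul_le_mul_right (p ^ k) (hd : d + 1 ≤ p)]
  rw [replaceDigit, Nat.add_mul_div_right _ _ (pow_pos hp _), Nat.div_eq_of_lt hlow, zero_add]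

lemma replaceDigit_modEq (k d n : ℕ) : replaceDigit p k d n ≡ n [MOD p ^ k] := by
  have : replaceDigit p k d n = n % p ^ k + (d + n / p ^ (k + 1) * p) * p ^ k := by
    rw [replaceDigit, pow_succ]; ring
  rw [this, Nat.ModEq, Nat.add_mul_mod_self_right, Nat.mod_mod]

lemma digit_eq_of_modEq {a b : ℕ} (j : ℕ) (h : a ≡ b [MOD p ^ (j + 1)]) :
    digit p j a = digit p j b := by
  rw [digit, digit, ← Nat.mod_mul_right_div_self, ← Nat.mod_mul_right_div_self, ← pow_succ, h]

lemma digit_eq_of_div_eq {a b i j : ℕ} (hij : i ≤ j) (h : a / p ^ i = b / p ^ i) :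
    digit p j a = digit p j b := by
  obtain ⟨l, rfl⟩ := Nat.exists_eq_add_of_le hij
  rw [digit, digit, pow_add, ← Nat.div_div_eq_div_mul, ← Nat.div_div_eq_div_mul, h]

lemma digit_replaceDigit_self (hp : 0 < p) {d : ℕ} (hd : d < p) (k n : ℕ) :
    digit p k (replaceDigit p k d n) = d := by
  have : replaceDigit p k d n = n % p ^ k + (d + n / p ^ (k + 1) * p) * p ^ k := by
    rw [replaceDigit, pow_succ]; ring
  rw [digit, this, Nat.add_mul_div_right _ _ (pow_pos hp k),
    Nat.div_eq_of_lt (Nat.mod_lt _ (pow_pos hp k)), zero_add, Nat.add_mul_mod_self_right,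
    Nat.mod_eq_of_lt hd]

lemma digit_replaceDigit_of_ne (hp : 0 < p) {d : ℕ} (hd : d < p) {j k : ℕ} (hjk : j ≠ k)
    (n : ℕ) : digit p j (replaceDigit p k d n) = digit p j n := by
  rcases lt_or_gt_of_ne hjk with hlt | hgt
  · exact digit_eq_of_modEq j ((replaceDigit_modEq k d n).of_dvd (pow_dvd_pow p hlt))
  · exact digit_eq_of_div_eq hgt (replaceDigit_div_pow_succ hp hd k n)

lemma replaceDigit_replaceDigit (hp : 0 < p) {d' : ℕ} (hd' : d' < p) (k d n : ℕ) :
    replaceDigit p k d (replaceDigit p k d' n) = replaceDigit p k d n := by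
  conv_lhs => rw [replaceDigit, replaceDigit_modEq k d' n, replaceDigit_div_pow_succ hp hd']
  rfl

lemma replaceDigit_lt (hp : 0 < p) {m k d n : ℕ} (hk : k < m) (hd : d < p) (hn : n < p ^ m) :
    replaceDigit p k d n < p ^ m := by
  have hpow : p ^ m = p ^ (m - (k + 1)) * p ^ (k + 1) := by rw [← pow_add]; congr 1; omega
  rw [hpow, ← Nat.div_lt_iff_lt_mul (pow_pos hp _), replaceDigit_div_pow_succ hp hd,
    Nat.div_lt_iff_lt_mul (pow_pos hp _), ← hpow]
  exact hn

lemma replaceDigit_add {k n u : ℕ} (h : digit p k (n + u) = digit p k n) (d : ℕ) :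
    replaceDigit p k d n + u = replaceDigit p k d (n + u) := by
  have hn := replaceDigit_digit_self (p := p) k n
  have hnu := replaceDigit_digit_self (p := p) k (n + u)
  rw [h] at hnu
  unfold replaceDigit at *
  omega

lemma eq_of_digit_eq (hp : 0 < p) {m a b : ℕ} (ha : a < p ^ m) (hb : b < p ^ m)
    (h : ∀ j < m, digit p j a = digit p j b) : a = b := by
  induction m generalizing a b with
  | zero => simp only [pow_zero, Nat.lt_one_iff] at ha hb; omega
  | succ m ih =>
    have hdiv : a / p = b / p := by
      refine ih ?_ ?_ fun j hj => ?_
      · rwa [Nat.div_lt_iff_lt_mul hp, ← pow_succ]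
      · rwa [Nat.div_lt_iff_lt_mul hp, ← pow_succ]
      · simpa [digit, Nat.div_div_eq_div_mul, pow_succ'] using h (j + 1) (by omega)
    have hmod : a % p = b % p := by simpa [digit] using h 0 (by omega)
    rw [← Nat.div_add_mod a p, ← Nat.div_add_mod b p, hdiv, hmod]

lemma sum_eq_zero_of_sum_replaceDigit_eq_zero {M : Type*} [AddCommMonoid M] [IsAddTorsionFree M]
    (hp : 0 < p) {S : Finset ℕ} {k : ℕ} {g : ℕ → M}
    (hS : ∀ i ∈ S, ∀ d < p, replaceDigit p k d i ∈ S)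
    (hg : ∀ i ∈ S, ∑ d ∈ range p, g (replaceDigit p k d i) = 0) :
    ∑ i ∈ S, g i = 0 := by
  let φ : ℕ × ℕ → ℕ × ℕ := fun x => (replaceDigit p k x.2 x.1, digit p k x.1)
  have hφ : ∀ x ∈ S ×ˢ range p, φ x ∈ S ×ˢ range p := fun x hx => by
    simp only [mem_product, mem_range] at hx ⊢
    exact ⟨hS _ hx.1 _ hx.2, digit_lt hp k x.1⟩
  have hφφ : ∀ x ∈ S ×ˢ range p, φ (φ x) = x := fun x hx => by
    simp only [mem_product, mem_range] at hx
    simp only [φ, digit_replaceDigit_self hp hx.2, replaceDigit_replaceDigit hp hx.2,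
      replaceDigit_digit_self]
  have hswap : ∑ x ∈ S ×ˢ range p, g (replaceDigit p k x.2 x.1) = ∑ x ∈ S ×ˢ range p, g x.1 :=
    sum_nbij' φ φ hφ hφ hφφ hφφ fun _ _ => rfl
  rw [sum_product, sum_product_right, sum_eq_zero hg] at hswap
  simp only [sum_const, card_range] at hswap
  exact nsmul_right_injective hp.ne' (hswap.symm.trans (smul_zero p).symm)

end Digits

/-- `pathSeq π v l` is the paper's `v_{π(l+1)}` (path positions counted from `0`), and `0` for
`l ≥ m`. -/
def pathSeq {m : ℕ} (π : Equiv.Perm (Fin m)) (v : Fin m → ℕ) (l : ℕ) : ℕ :=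
  if h : l < m then v (π ⟨l, h⟩) else 0

def pathSum (n : ℕ) (w : ℕ → ℕ) : ℤ := ∑ β ∈ range n, (w β : ℤ) * w (β + 1)

lemma pathSeq_of_lt {m : ℕ} (π : Equiv.Perm (Fin m)) (v : Fin m → ℕ) {l : ℕ} (hl : l < m) :
    pathSeq π v l = v (π ⟨l, hl⟩) := dif_pos hl

lemma pathSeq_update {m : ℕ} (π : Equiv.Perm (Fin m)) (v : Fin m → ℕ) {j : ℕ} (hj : j < m)
    (d : ℕ) : pathSeq π (Function.update v (π ⟨j, hj⟩) d) = Function.update (pathSeq π v) j d := by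
  funext l
  by_cases hl : l < m
  · simp only [pathSeq, dif_pos hl, Function.update_apply, π.injective.eq_iff, Fin.ext_iff]
  · have : l ≠ j := by omega
    simp [pathSeq, hl, this]

lemma pathSum_update_sub_update {w w' : ℕ → ℕ} {n j : ℕ} (hj : j < n)
    (hww' : ∀ l ≤ j, w l = w' l) (d : ℕ) :
    pathSum n (Function.update w j d) - pathSum n (Function.update w' j d)
      = pathSum n w - pathSum n w' + ((d : ℤ) - w j) * ((w (j + 1) : ℤ) - w' (j + 1)) := by
  have hterm : ∀ β ∈ range n,
      ((Function.update w j d β : ℤ) * (Function.update w j d (β + 1) : ℕ)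
        - (Function.update w' j d β : ℤ) * (Function.update w' j d (β + 1) : ℕ))
        - ((w β : ℤ) * w (β + 1) - (w' β : ℤ) * w' (β + 1))
      = if β = j then ((d : ℤ) - w j) * ((w (j + 1) : ℤ) - w' (j + 1)) else 0 := by
    intro β _
    rcases lt_trichotomy β j with hlt | rfl | hgt
    · simp [Function.update_apply, hlt.ne, hww' β hlt.le, hww' (β + 1) hlt]
    · simp only [Function.update_self, Function.update_of_ne (Nat.succ_ne_self β), hww' β le_rfl,
        if_true]
      ring
    · simp [hgt.ne', (Nat.lt_succ_of_lt hgt).ne']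
  have h := sum_congr rfl hterm
  rw [sum_ite_eq', if_pos (mem_range.2 hj)] at h
  simp only [sum_sub_distrib] at h
  unfold pathSum
  linear_combination h

section Exponents

variable {p m lam : ℕ} {hm : 0 < m} {π : Equiv.Perm (Fin m)} {cf : Fin m → ZMod lam}
  {c : ZMod lam}

lemma aFun_eq (t α : ℕ) (v : Fin m → ℕ) :
    aFun p m lam hm π cf c t α v
      = ((lam / p : ℕ) : ℤ) * (pathSum (m - 1) (pathSeq π v) + α * pathSeq π v 0
          + t * pathSeq π v (m - 1))
        + ∑ β, ((cf β).val : ℤ) * v β + ((c.val : ℕ) : ℤ) := by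
  have hQ : ∑ β : Fin (m - 1), (v (π (Fin.castLE (Nat.sub_le m 1) β)) : ℤ) *
      (v (π ⟨(β : ℕ) + 1, by have := β.isLt; omega⟩) : ℤ) = pathSum (m - 1) (pathSeq π v) := by
    rw [pathSum, ← Fin.sum_univ_eq_sum_range]
    refine sum_congr rfl fun β _ => ?_
    rw [pathSeq_of_lt π v (by omega), pathSeq_of_lt π v (by omega)]
    rfl
  rw [aFun, fQuad, hQ, pathSeq_of_lt π v hm, pathSeq_of_lt π v (by omega)]
  ring

lemma aFun_sub_aFun (t t' α : ℕ) (x y : Fin m → ℕ) :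
    aFun p m lam hm π cf c t α x - aFun p m lam hm π cf c t' α y
      = (aFun p m lam hm π cf c t 0 x - aFun p m lam hm π cf c t' 0 y)
        + ((lam / p : ℕ) : ℤ) * (((pathSeq π x 0 : ℤ) - pathSeq π y 0) * α) := by
  simp only [aFun_eq]; push_cast; ring

lemma aFun_sub_aFun_of_eq (t t' : ℕ) (x : Fin m → ℕ) :
    aFun p m lam hm π cf c t 0 x - aFun p m lam hm π cf c t' 0 x
      = ((lam / p : ℕ) : ℤ) * (((t : ℤ) - t') * pathSeq π x (m - 1)) := by
  simp only [aFun_eq]; ring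

lemma sum_mul_update_sub_update (a : Fin m → ℤ) {x y : Fin m → ℕ} {k : Fin m} (hxy : x k = y k)
    (d : ℕ) :
    ∑ β, a β * (Function.update x k d β : ℕ) - ∑ β, a β * (Function.update y k d β : ℕ)
      = ∑ β, a β * (x β : ℤ) - ∑ β, a β * (y β : ℤ) := by
  simp only [← sum_sub_distrib]
  refine sum_congr rfl fun β _ => ?_
  rcases eq_or_ne β k with rfl | hβ
  · simp [hxy]
  · simp [hβ]

lemma aFun_update_sub_aFun_update (t t' : ℕ) {x y : Fin m → ℕ} {j : ℕ} (hj : j + 1 < m)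
    (hxy : ∀ l ≤ j, pathSeq π x l = pathSeq π y l) (d : ℕ) :
    aFun p m lam hm π cf c t 0 (Function.update x (π ⟨j, by omega⟩) d)
        - aFun p m lam hm π cf c t' 0 (Function.update y (π ⟨j, by omega⟩) d)
      = (aFun p m lam hm π cf c t 0 x - aFun p m lam hm π cf c t' 0 y)
        + ((lam / p : ℕ) : ℤ) * (((d : ℤ) - pathSeq π x j)
          * ((pathSeq π x (j + 1) : ℤ) - pathSeq π y (j + 1))) := by
  have hxyj : x (π ⟨j, by omega⟩) = y (π ⟨j, by omega⟩) := by
    simpa only [pathSeq_of_lt π _ (show j < m by omega)] using hxy j le_rfl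
  have hlin := sum_mul_update_sub_update (fun β => ((cf β).val : ℤ)) hxyj d
  have hpath := pathSum_update_sub_update (n := m - 1) (by omega) hxy d
  have hlast : (m - 1) ≠ j := by omega
  simp only [aFun_eq, pathSeq_update, Function.update_of_ne hlast] at hlin ⊢
  linear_combination hlin + ((lam / p : ℕ) : ℤ) * hpath

end Exponents

lemma _root_.IsPrimitiveRoot.geom_sum_zpow_eq_zero {K : Type*} [Field K] {ζ : K} {p : ℕ}
    (hζ : IsPrimitiveRoot ζ p) {D : ℤ} (hD : ¬ (p : ℤ) ∣ D) :
    ∑ d ∈ range p, (ζ ^ D) ^ d = 0 := by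
  have hne : ζ ^ D ≠ 1 := by rwa [Ne, hζ.zpow_eq_one_iff_dvd]
  have hpow : (ζ ^ D) ^ p = 1 := by
    rw [← zpow_natCast, ← zpow_mul, mul_comm, zpow_mul, zpow_natCast, hζ.pow_eq_one, one_zpow]
  rw [geom_sum_eq hne, hpow, sub_self, zero_div]

lemma isPrimitiveRoot_omg {lam : ℕ} (hl : lam ≠ 0) : IsPrimitiveRoot (omg lam) lam :=
  Complex.isPrimitiveRoot_exp lam hl

lemma isPrimitiveRoot_omg_pow_div {p lam : ℕ} (hpl : p ∣ lam) (hl : lam ≠ 0) :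
    IsPrimitiveRoot (omg lam ^ (lam / p)) p := by
  have hp : p ≠ 0 := by rintro rfl; exact hl (Nat.eq_zero_of_zero_dvd hpl)
  have h := (isPrimitiveRoot_omg hl).pow_of_dvd (Nat.div_ne_zero_iff_of_dvd hpl |>.2 ⟨hl, hp⟩)
    (Nat.div_dvd_of_dvd hpl)
  rwa [Nat.div_div_self hpl hl] at h

lemma omg_zpow_mul_conj {lam : ℕ} (hl : lam ≠ 0) (A B : ℤ) :
    omg lam ^ A * starRingEnd ℂ (omg lam ^ B) = omg lam ^ (A - B) := by
  have hω := isPrimitiveRoot_omg hl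
  rw [map_zpow₀, ← Complex.inv_eq_conj (hω.norm'_eq_one hl), inv_zpow',
    ← zpow_add₀ (hω.ne_zero hl), sub_eq_add_neg]

lemma sum_range_omg_zpow_add_mul_eq_zero {p lam : ℕ} (hpl : p ∣ lam) (hl : lam ≠ 0) (A : ℤ)
    {D : ℤ} (hD : ¬ (p : ℤ) ∣ D) :
    ∑ d ∈ range p, omg lam ^ (A + ((lam / p : ℕ) : ℤ) * (D * d)) = 0 := by
  have hω := (isPrimitiveRoot_omg hl).ne_zero hl
  simp only [zpow_add₀ hω, zpow_mul, zpow_natCast]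
  rw [← mul_sum, (isPrimitiveRoot_omg_pow_div hpl hl).geom_sum_zpow_eq_zero hD, mul_zero]

noncomputable def firstDiff (X Y : ℕ → ℕ) : ℕ := sInf {l | X l ≠ Y l}

section FirstDiff

variable {X Y : ℕ → ℕ}

lemma eq_of_lt_firstDiff {l : ℕ} (h : l < firstDiff X Y) : X l = Y l :=
  not_not.1 (Nat.notMem_of_lt_sInf h)

lemma ne_at_firstDiff (h : X ≠ Y) : X (firstDiff X Y) ≠ Y (firstDiff X Y) :=
  Nat.sInf_mem (Function.ne_iff.1 h)

lemma firstDiff_lt {m l : ℕ} (hl : l < m) (h : X l ≠ Y l) : firstDiff X Y < m :=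
  (Nat.sInf_le h).trans_lt hl

lemma firstDiff_self (X : ℕ → ℕ) : firstDiff X X = 0 := by
  simp [firstDiff]

lemma firstDiff_update {j : ℕ} (hj : j < firstDiff X Y) (d : ℕ) :
    firstDiff (Function.update X j d) (Function.update Y j d) = firstDiff X Y := by
  unfold firstDiff
  congr 1
  ext l
  rcases eq_or_ne l j with rfl | hl
  · simp [eq_of_lt_firstDiff hj]
  · simp [hl]

end FirstDiff

def pathDigits (p : ℕ) {m : ℕ} (π : Equiv.Perm (Fin m)) (a : ℕ) : ℕ → ℕ :=
  pathSeq π (dig p m a)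

section PathDigits

variable {p m : ℕ} (π : Equiv.Perm (Fin m))

lemma pathDigits_of_lt (a : ℕ) {l : ℕ} (hl : l < m) :
    pathDigits p π a l = digit p (π ⟨l, hl⟩) a :=
  pathSeq_of_lt π _ hl

lemma pathSeq_dig (a : ℕ) : pathSeq π (dig p m a) = pathDigits p π a := rfl

lemma pathDigits_lt (hp : 0 < p) (a l : ℕ) : pathDigits p π a l < p := by
  unfold pathDigits pathSeq
  split
  · exact digit_lt hp _ a
  · exact hp

lemma dig_replaceDigit (hp : 0 < p) {d : ℕ} (hd : d < p) (k : Fin m) (n : ℕ) :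
    dig p m (replaceDigit p k d n) = Function.update (dig p m n) k d := by
  funext j
  rcases eq_or_ne j k with rfl | hj
  · rw [Function.update_self]
    exact digit_replaceDigit_self hp hd _ n
  · rw [Function.update_of_ne hj]
    exact digit_replaceDigit_of_ne hp hd (Fin.val_ne_of_ne hj) n

lemma pathDigits_replaceDigit (hp : 0 < p) {d : ℕ} (hd : d < p) {j : ℕ} (hj : j < m) (n : ℕ) :
    pathDigits p π (replaceDigit p (π ⟨j, hj⟩) d n) = Function.update (pathDigits p π n) j d := by
  rw [pathDigits, dig_replaceDigit hp hd, pathSeq_update]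
  rfl

lemma exists_pathDigits_ne (hp : 0 < p) {a b : ℕ} (ha : a < p ^ m) (hb : b < p ^ m)
    (hab : a ≠ b) : ∃ l < m, pathDigits p π a l ≠ pathDigits p π b l := by
  by_contra! h
  refine hab (eq_of_digit_eq hp ha hb fun j hj => ?_)
  simpa [pathDigits_of_lt] using h (π.symm ⟨j, hj⟩) (π.symm ⟨j, hj⟩).isLt

end PathDigits

lemma not_dvd_natCast_sub {p a b : ℕ} (ha : a < p) (hb : b < p) (hab : a ≠ b) :
    ¬ (p : ℤ) ∣ (a : ℤ) - b := fun h =>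
  hab (Nat.ModEq.eq_of_lt_of_lt (Int.natCast_modEq_iff.1 (Int.modEq_iff_dvd.2 h)).symm ha hb)

/-- What the `p` rows contribute at the positions `(i + n, i)`: the row sum cancels unless the
digits at `π 0` agree. -/
noncomputable def corrTerm (p m lam : ℕ) (hm : 0 < m) (π : Equiv.Perm (Fin m))
    (cf : Fin m → ZMod lam) (c : ZMod lam) (t t' n i : ℕ) : ℂ :=
  if pathDigits p π (i + n) 0 = pathDigits p π i 0 then
    p * omg lam ^ (aFun p m lam hm π cf c t 0 (dig p m (i + n))
      - aFun p m lam hm π cf c t' 0 (dig p m i))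
  else 0

section Correlation

variable {p m lam : ℕ} {hm : 0 < m} {π : Equiv.Perm (Fin m)} {cf : Fin m → ZMod lam}
  {c : ZMod lam}

lemma sum_range_omg_aFun_sub_aFun (hpl : p ∣ lam) (hl : lam ≠ 0) (t t' : ℕ) {x y : Fin m → ℕ}
    (hx : pathSeq π x 0 < p) (hy : pathSeq π y 0 < p) :
    ∑ α ∈ range p, omg lam ^ (aFun p m lam hm π cf c t α x - aFun p m lam hm π cf c t' α y)
      = if pathSeq π x 0 = pathSeq π y 0 then
          p * omg lam ^ (aFun p m lam hm π cf c t 0 x - aFun p m lam hm π cf c t' 0 y)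
        else 0 := by
  rw [sum_congr rfl fun α _ => congrArg (omg lam ^ ·) (aFun_sub_aFun t t' α x y)]
  split_ifs with h
  · simp only [h, sub_self, zero_mul, mul_zero, add_zero, sum_const, card_range, nsmul_eq_mul]
  · exact sum_range_omg_zpow_add_mul_eq_zero hpl hl _ (not_dvd_natCast_sub hx hy h)

lemma codeCorr_codeC_natCast (hpl : p ∣ lam) (hl : lam ≠ 0) (hp : 0 < p) (t t' n : ℕ) :
    codeCorr p (p ^ m) (codeC p m lam hm π cf c t) (codeC p m lam hm π cf c t') n
      = ∑ i ∈ range (p ^ m - n), corrTerm p m lam hm π cf c t t' n i := by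
  simp only [codeCorr, aCorr, if_pos (Int.natCast_nonneg n), Int.toNat_natCast, codeC,
    omg_zpow_mul_conj hl]
  rw [sum_comm]
  exact sum_congr rfl fun i _ =>
    sum_range_omg_aFun_sub_aFun hpl hl t t' (pathDigits_lt π hp _ 0) (pathDigits_lt π hp _ 0)

end Correlation

section Cancellation

variable {p m lam : ℕ} {hm : 0 < m} {π : Equiv.Perm (Fin m)} {cf : Fin m → ZMod lam}
  {c : ZMod lam}

lemma sum_range_omg_aFun_sub_aFun_of_ne (hpl : p ∣ lam) (hl : lam ≠ 0) {t t' : ℕ} (ht : t < p)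
    (ht' : t' < p) (htt' : t ≠ t') :
    ∑ i ∈ range (p ^ m), omg lam ^ (aFun p m lam hm π cf c t 0 (dig p m i)
      - aFun p m lam hm π cf c t' 0 (dig p m i)) = 0 := by
  have hp : 0 < p := by omega
  have hlast : m - 1 < m := by omega
  refine sum_eq_zero_of_sum_replaceDigit_eq_zero hp (k := π ⟨m - 1, hlast⟩)
    (fun i hi d hd => mem_range.2 (replaceDigit_lt hp (π _).isLt hd (mem_range.1 hi)))
    (fun i _ => ?_)
  have hterm : ∀ d ∈ range p,
      omg lam ^ (aFun p m lam hm π cf c t 0 (dig p m (replaceDigit p (π ⟨m - 1, hlast⟩) d i))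
        - aFun p m lam hm π cf c t' 0 (dig p m (replaceDigit p (π ⟨m - 1, hlast⟩) d i)))
      = omg lam ^ (0 + ((lam / p : ℕ) : ℤ) * (((t : ℤ) - t') * d)) := fun d hd => by
    rw [aFun_sub_aFun_of_eq, pathSeq_dig, pathDigits_replaceDigit π hp (mem_range.1 hd),
      Function.update_self, zero_add]
  rw [sum_congr rfl hterm]
  exact sum_range_omg_zpow_add_mul_eq_zero hpl hl 0 (not_dvd_natCast_sub ht ht' htt')

lemma replaceDigit_add_of_lt_firstDiff {b i n : ℕ} (hb : b < m)
    (h : b < firstDiff (pathDigits p π (i + n)) (pathDigits p π i)) (d : ℕ) :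
    replaceDigit p (π ⟨b, hb⟩) d i + n = replaceDigit p (π ⟨b, hb⟩) d (i + n) :=
  replaceDigit_add (by simpa only [pathDigits_of_lt π _ hb] using eq_of_lt_firstDiff h) d

lemma firstDiff_pathDigits_replaceDigit (hp : 0 < p) {b i n : ℕ} (hb : b < m)
    (h : b < firstDiff (pathDigits p π (i + n)) (pathDigits p π i)) {d : ℕ} (hd : d < p) :
    firstDiff (pathDigits p π (replaceDigit p (π ⟨b, hb⟩) d i + n))
        (pathDigits p π (replaceDigit p (π ⟨b, hb⟩) d i))
      = firstDiff (pathDigits p π (i + n)) (pathDigits p π i) := by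
  rw [replaceDigit_add_of_lt_firstDiff hb h, pathDigits_replaceDigit π hp hd,
    pathDigits_replaceDigit π hp hd, firstDiff_update h]

lemma aFun_replaceDigit_add_sub_aFun_replaceDigit (hp : 0 < p) (t t' : ℕ) {b i n : ℕ}
    (hb : b + 1 < m) (h : b < firstDiff (pathDigits p π (i + n)) (pathDigits p π i))
    {d : ℕ} (hd : d < p) :
    aFun p m lam hm π cf c t 0 (dig p m (replaceDigit p (π ⟨b, by omega⟩) d i + n))
        - aFun p m lam hm π cf c t' 0 (dig p m (replaceDigit p (π ⟨b, by omega⟩) d i))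
      = (aFun p m lam hm π cf c t 0 (dig p m (i + n)) - aFun p m lam hm π cf c t' 0 (dig p m i))
        + ((lam / p : ℕ) : ℤ) * (((d : ℤ) - pathDigits p π (i + n) b)
          * ((pathDigits p π (i + n) (b + 1) : ℤ) - pathDigits p π i (b + 1))) := by
  rw [replaceDigit_add_of_lt_firstDiff (by omega) h, dig_replaceDigit hp hd,
    dig_replaceDigit hp hd,
    aFun_update_sub_aFun_update t t' hb fun l hl => eq_of_lt_firstDiff (hl.trans_lt h)]
  rfl

/-- Replacing the digit at `π b` of both `i` and `i + n` by `d` moves the exponent through all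
`p`-th roots of unity, because the path digits of `i + n` and `i` at `b + 1` differ. -/
lemma sum_corrTerm_filter_firstDiff_eq_zero (hpl : p ∣ lam) (hl : lam ≠ 0) (hp : 0 < p)
    (t t' n : ℕ) {b : ℕ} (hb : b + 1 < m) :
    ∑ i ∈ range (p ^ m - n) with firstDiff (pathDigits p π (i + n)) (pathDigits p π i) = b + 1,
      corrTerm p m lam hm π cf c t t' n i = 0 := by
  refine sum_eq_zero_of_sum_replaceDigit_eq_zero hp (k := π ⟨b, by omega⟩) (fun i hi d hd => ?_)
    (fun i hi => ?_)
  all_goals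
    obtain ⟨hi, hfd⟩ := mem_filter.1 hi
    have hlt : b < firstDiff (pathDigits p π (i + n)) (pathDigits p π i) := by omega
  · have hbound := replaceDigit_lt hp (π ⟨b, by omega⟩).isLt hd (show i + n < p ^ m by grind)
    rw [← replaceDigit_add_of_lt_firstDiff (by omega) hlt] at hbound
    rw [mem_filter, mem_range, firstDiff_pathDigits_replaceDigit hp (by omega) hlt hd]
    exact ⟨by omega, hfd⟩
  have hD := ne_at_firstDiff (X := pathDigits p π (i + n)) (Y := pathDigits p π i) fun hX => by
    rw [hX, firstDiff_self] at hfd; omega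
  rw [hfd] at hD
  have hterm : ∀ d ∈ range p,
      corrTerm p m lam hm π cf c t t' n (replaceDigit p (π ⟨b, by omega⟩) d i)
      = p * omg lam ^ ((aFun p m lam hm π cf c t 0 (dig p m (i + n))
            - aFun p m lam hm π cf c t' 0 (dig p m i)
            - ((lam / p : ℕ) : ℤ) * (pathDigits p π (i + n) b
              * ((pathDigits p π (i + n) (b + 1) : ℤ) - pathDigits p π i (b + 1))))
          + ((lam / p : ℕ) : ℤ) * (((pathDigits p π (i + n) (b + 1) : ℤ)
            - pathDigits p π i (b + 1)) * d)) := fun d hd => by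
    have hfd' := firstDiff_pathDigits_replaceDigit hp (by omega) hlt (mem_range.1 hd)
    rw [corrTerm, if_pos (eq_of_lt_firstDiff (by omega)),
      aFun_replaceDigit_add_sub_aFun_replaceDigit hp t t' hb hlt (mem_range.1 hd)]
    congr 2
    ring
  rw [sum_congr rfl hterm, ← mul_sum, sum_range_omg_zpow_add_mul_eq_zero hpl hl _
    (not_dvd_natCast_sub (pathDigits_lt π hp _ _) (pathDigits_lt π hp _ _) hD), mul_zero]

lemma sum_corrTerm_eq_zero_of_pos (hpl : p ∣ lam) (hl : lam ≠ 0) (hp : 0 < p) (t t' : ℕ)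
    {n : ℕ} (hn : 0 < n) :
    ∑ i ∈ range (p ^ m - n), corrTerm p m lam hm π cf c t t' n i = 0 := by
  have hne : ∀ i ∈ range (p ^ m - n), ∃ l < m, pathDigits p π (i + n) l ≠ pathDigits p π i l :=
    fun i hi => exists_pathDigits_ne π hp (by grind) (by grind) (by omega)
  have hfd : ∀ i ∈ range (p ^ m - n),
      firstDiff (pathDigits p π (i + n)) (pathDigits p π i) ∈ range m := fun i hi => by
    obtain ⟨l, hl, h⟩ := hne i hi
    exact mem_range.2 (firstDiff_lt hl h)
  rw [← sum_fiberwise_of_maps_to hfd]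
  refine sum_eq_zero fun b hb => ?_
  rcases b with _ | b
  · refine sum_eq_zero fun i hi => if_neg ?_
    obtain ⟨hi, hfd0⟩ := mem_filter.1 hi
    obtain ⟨l, -, h⟩ := hne i hi
    rw [← hfd0]
    exact ne_at_firstDiff fun hX => h (congr_fun hX l)
  · exact sum_corrTerm_filter_firstDiff_eq_zero hpl hl hp t t' n (mem_range.1 hb)

end Cancellation

lemma aCorr_neg (L : ℕ) (a b : ℕ → ℂ) (u : ℤ) :
    aCorr L a b (-u) = starRingEnd ℂ (aCorr L b a u) := by
  rcases lt_trichotomy u 0 with hu | rfl | hu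
  · rw [aCorr, aCorr, if_pos (by omega), if_neg (by omega), map_sum]
    simp [mul_comm]
  · simp [aCorr, mul_comm]
  · rw [aCorr, aCorr, if_neg (by omega), if_pos (by omega), neg_neg, map_sum]
    simp [mul_comm]

lemma codeCorr_neg (M L : ℕ) (C D : ℕ → ℕ → ℂ) (u : ℤ) :
    codeCorr M L C D (-u) = starRingEnd ℂ (codeCorr M L D C u) := by
  simp only [codeCorr, aCorr_neg, map_sum]

lemma codeCorr_codeC_natCast_eq {p m lam : ℕ} {hm : 0 < m} {π : Equiv.Perm (Fin m)}
    {cf : Fin m → ZMod lam} {c : ZMod lam} (hpl : p ∣ lam) (hl : lam ≠ 0) {t t' : ℕ}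
    (ht : t < p) (ht' : t' < p) (n : ℕ) :
    codeCorr p (p ^ m) (codeC p m lam hm π cf c t) (codeC p m lam hm π cf c t') n
      = if n = 0 ∧ t = t' then (p : ℂ) ^ (m + 1) else 0 := by
  have hp : 0 < p := by omega
  rw [codeCorr_codeC_natCast hpl hl hp]
  rcases Nat.eq_zero_or_pos n with rfl | hn
  · simp only [corrTerm, add_zero, if_true, Nat.sub_zero, ← mul_sum]
    by_cases htt' : t = t'
    · simp [htt', pow_succ']
    · rw [sum_range_omg_aFun_sub_aFun_of_ne hpl hl ht ht' htt', mul_zero, if_neg (by tauto)]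
  · rw [sum_corrTerm_eq_zero_of_pos hpl hl hp t t' hn, if_neg (by omega)]

end GolayCCC

theorem statement0_general (p : ℕ) (m : ℕ) (hm : 0 < m) (q : ℕ) (hq : 0 < q)
    (π : Equiv.Perm (Fin m)) (cf : Fin m → ZMod (Nat.lcm p q)) (c : ZMod (Nat.lcm p q))
    (t t' : ℕ) (ht : t < p) (ht' : t' < p) (u : ℤ) :
    codeCorr p (p ^ m) (codeC p m (Nat.lcm p q) hm π cf c t)
        (codeC p m (Nat.lcm p q) hm π cf c t') u =
      if u = 0 ∧ t = t' then (p : ℂ) ^ (m + 1) else 0 := by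
  have hpl : p ∣ Nat.lcm p q := Nat.dvd_lcm_left p q
  have hl : Nat.lcm p q ≠ 0 := Nat.lcm_ne_zero (by omega) hq.ne'
  rcases le_or_gt 0 u with hu | hu
  · lift u to ℕ using hu
    simpa only [Nat.cast_eq_zero] using GolayCCC.codeCorr_codeC_natCast_eq hpl hl ht ht' u
  · rw [← neg_neg u, GolayCCC.codeCorr_neg, ← Int.toNat_of_nonneg (neg_nonneg.2 hu.le),
      GolayCCC.codeCorr_codeC_natCast_eq hpl hl ht' ht, if_neg (by omega), if_neg (by omega),
      map_zero]

/-- the family `{C_t^p : t = 0,…,p-1}` forms a `(p,p,p^m)`-CCC. -/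
theorem statement0 (p : ℕ) (hp : p.Prime) (m : ℕ) (hm : 0 < m) (q : ℕ) (hq : 0 < q)
    (π : Equiv.Perm (Fin m)) (cf : Fin m → ZMod (Nat.lcm p q)) (c : ZMod (Nat.lcm p q))
    (t t' : ℕ) (ht : t < p) (ht' : t' < p) (u : ℤ) (hu : u.natAbs < p ^ m) :
    codeCorr p (p ^ m) (codeC p m (Nat.lcm p q) hm π cf c t)
        (codeC p m (Nat.lcm p q) hm π cf c t') u =
      if u = 0 ∧ t = t' then (p : ℂ) ^ (m + 1) else 0 :=
  statement0_general p m hm q hq π cf c t t' ht ht' u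
end

section
/- For every prime p, every integer m ≥ 1, every positive integer q, every permutation π of {1,…,m}, all coefficients c_1,…,c_m ∈ Z_λ, constant c ∈ Z_λ (where λ = lcm(p,q)), and every t ∈ {0,…,p−1}, the code C_t^p is a (p, p^m) complementary set: Σ_{α=0}^{p−1} C(ψ(a_t^α), ψ(a_t^α))(u) = 0 for every integer u with 0 < |u| < p^m. -/
open Finset

/-!
Summing over `α` first kills every pair of positions `(γ + n, γ)` whose digits at `π(1)` differ,
since `α` enters the phase only through the character `α ↦ ω_p^{α (v_{π(1)} - w_{π(1)})}`.
For a remaining pair of digit vectors `(v, w)`, let `b` be the first `π`-position where they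
differ and `j = π(b - 1)`. Adding `d ∈ ℤ_p` to digit `j` of both `v` and `w` preserves the
difference of the numbers and the pattern of disagreeing digits (hence `b` and `j`), and it
multiplies the phase `ω_λ^{a(v) - a(w)}` by `ω_p^{d (v_{π(b)} - w_{π(b)})}`: only the quadratic
term `v_{π(b-1)} v_{π(b)}` sees the change. These shifts permute the remaining pairs, so `p` times
the phase sum is the sum of each phase times a geometric sum `∑_d ω_p^{d e}` with `p ∤ e`, i.e. `0`.
-/

lemma omg_ne_zero (n : ℕ) : omg n ≠ 0 := Complex.exp_ne_zero _

lemma omg_pow_self (n : ℕ) : omg n ^ n = 1 := by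
  rcases eq_or_ne n 0 with rfl | hn
  · exact pow_zero _
  · simpa [omg] using (Complex.isPrimitiveRoot_exp n hn).pow_eq_one

lemma omg_zpow_eq_one_iff {n : ℕ} (hn : n ≠ 0) (k : ℤ) :
    omg n ^ k = 1 ↔ (n : ℤ) ∣ k := by
  simpa [omg] using (Complex.isPrimitiveRoot_exp n hn).zpow_eq_one_iff_dvd k

lemma omg_zpow_eq_of_dvd_sub {n : ℕ} {a b : ℤ} (h : (n : ℤ) ∣ a - b) :
    omg n ^ a = omg n ^ b := by
  obtain ⟨k, hk⟩ := h
  rw [show a = b + n * k by omega, zpow_add₀ (omg_ne_zero n), zpow_mul, zpow_natCast,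
    omg_pow_self, one_zpow, mul_one]

lemma conj_omg_zpow (n : ℕ) (k : ℤ) : starRingEnd ℂ (omg n ^ k) = omg n ^ (-k) := by
  have : starRingEnd ℂ (omg n) = (omg n)⁻¹ := by
    rw [omg, ← Complex.exp_conj, ← Complex.exp_neg]
    congr 1
    simp [map_div₀, Complex.conj_I, map_ofNat]
    ring
  rw [map_zpow₀, this, inv_zpow, zpow_neg]

lemma sum_range_omg_zpow_mul_eq_zero {n : ℕ} {e : ℤ} (he : ¬ (n : ℤ) ∣ e) :
    ∑ d ∈ range n, omg n ^ (e * d) = 0 := by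
  rcases eq_or_ne n 0 with rfl | hn
  · simp
  have hne : omg n ^ e ≠ 1 := fun h => he ((omg_zpow_eq_one_iff hn e).mp h)
  simp_rw [zpow_mul, zpow_natCast]
  rw [geom_sum_eq hne, ← zpow_natCast, ← zpow_mul, mul_comm, zpow_mul, zpow_natCast,
    omg_pow_self, one_zpow, sub_self, zero_div]

lemma omg_zpow_div_mul {p lam : ℕ} (hp : p ∣ lam) (hlam : lam ≠ 0) (k : ℤ) :
    omg lam ^ (((lam / p : ℕ) : ℤ) * k) = omg p ^ k := by
  obtain ⟨K, rfl⟩ := hp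
  have hp0 : (p : ℂ) ≠ 0 := by exact_mod_cast left_ne_zero_of_mul hlam
  have hK0 : (K : ℂ) ≠ 0 := by exact_mod_cast right_ne_zero_of_mul hlam
  rw [zpow_mul, Nat.mul_div_cancel_left _ (Nat.pos_of_ne_zero (left_ne_zero_of_mul hlam)),
    zpow_natCast, omg, omg, ← Complex.exp_nat_mul]
  congr 2
  push_cast
  field_simp

lemma not_dvd_natCast_sub {p a b : ℕ} (ha : a < p) (hb : b < p) (hab : a ≠ b) :
    ¬ (p : ℤ) ∣ (a : ℤ) - b := fun h => by
  have := Int.eq_zero_of_dvd_of_natAbs_lt_natAbs h (by omega)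
  omega

lemma dvd_val_add_sub {p : ℕ} (a d : Fin p) : (p : ℤ) ∣ ((a + d : Fin p) : ℤ) - a - d := by
  rw [Fin.val_add, Int.natCast_mod, Nat.cast_add, ← dvd_neg,
    show -(((a : ℤ) + d) % p - a - d) = (a : ℤ) + d - ((a : ℤ) + d) % p by ring]
  exact (Int.mod_modEq _ _).dvd

lemma sum_eq_zero_of_twisted_invariance {ι G K : Type*} [Field K] [Fintype G] (s : Finset ι)
    (f : ι → K) (T : G → ι → ι) (hcard : (Fintype.card G : K) ≠ 0)
    (hinv : ∀ g, ∑ i ∈ s, f (T g i) = ∑ i ∈ s, f i)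
    (htwist : ∀ i ∈ s, ∃ χ : G → K, (∀ g, f (T g i) = f i * χ g) ∧ ∑ g, χ g = 0) :
    ∑ i ∈ s, f i = 0 := by
  choose! χ hχ hχsum using htwist
  have : (Fintype.card G : K) * ∑ i ∈ s, f i = 0 :=
    calc (Fintype.card G : K) * ∑ i ∈ s, f i = ∑ g : G, ∑ i ∈ s, f (T g i) := by
          simp only [hinv, sum_const, card_univ, nsmul_eq_mul]
      _ = ∑ i ∈ s, f i * ∑ g, χ i g := by
          rw [sum_comm]
          exact sum_congr rfl fun i hi => by simp only [hχ i hi, mul_sum]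
      _ = 0 := sum_eq_zero fun i hi => by rw [hχsum i hi, mul_zero]
  exact (mul_eq_zero.mp this).resolve_left hcard

lemma aCorr_neg (L : ℕ) (a b : ℕ → ℂ) (u : ℤ) :
    aCorr L a b (-u) = starRingEnd ℂ (aCorr L b a u) := by
  rcases lt_trichotomy u 0 with hu | rfl | hu
  · rw [aCorr, aCorr, if_pos (by omega), if_neg (by omega), map_sum]
    simp [mul_comm]
  · simp [aCorr, mul_comm]
  · rw [aCorr, aCorr, if_neg (by omega), if_pos hu.le, map_sum, neg_neg]
    simp [mul_comm]

lemma codeCorr_neg (M L : ℕ) (C D : ℕ → ℕ → ℂ) (u : ℤ) :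
    codeCorr M L C D (-u) = starRingEnd ℂ (codeCorr M L D C u) := by
  simp only [codeCorr, aCorr_neg, map_sum]

lemma codeCorr_natCast (M L : ℕ) (C D : ℕ → ℕ → ℂ) (n : ℕ) :
    codeCorr M L C D n =
      ∑ ν ∈ range M, ∑ i ∈ range (L - n), C ν (i + n) * starRingEnd ℂ (D ν i) := by
  simp [codeCorr, aCorr]

section Digits

variable {p m : ℕ}

lemma dig_eq_val_comp_symm (γ : Fin (p ^ m)) :
    dig p m γ = Fin.val ∘ finFunctionFinEquiv.symm γ := by
  funext j
  simp [dig, finFunctionFinEquiv_symm_apply_val]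

lemma finFunctionFinEquiv_update (v : Fin m → Fin p) (j : Fin m) (y : Fin p) :
    (finFunctionFinEquiv (Function.update v j y) : ℕ) + v j * p ^ (j : ℕ) =
      finFunctionFinEquiv v + y * p ^ (j : ℕ) := by
  simp only [finFunctionFinEquiv_apply, ← Finset.add_sum_erase _ _ (mem_univ j),
    Function.update_self]
  have : ∑ k ∈ univ.erase j, (Function.update v j y k : ℕ) * p ^ (k : ℕ) =
      ∑ k ∈ univ.erase j, (v k : ℕ) * p ^ (k : ℕ) :=
    sum_congr rfl fun k hk => by rw [Function.update_of_ne (ne_of_mem_erase hk)]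
  omega

lemma finFunctionFinEquiv_update_eq_add {v w : Fin m → Fin p} {n : ℕ}
    (h : (finFunctionFinEquiv v : ℕ) = finFunctionFinEquiv w + n) {j : Fin m} (hj : v j = w j)
    (y : Fin p) :
    (finFunctionFinEquiv (Function.update v j y) : ℕ) =
      finFunctionFinEquiv (Function.update w j y) + n := by
  have hv := finFunctionFinEquiv_update v j y
  have hw := finFunctionFinEquiv_update w j y
  rw [hj] at hv
  omega

def shiftPairs (p m n : ℕ) : Finset ((Fin m → Fin p) × (Fin m → Fin p)) :=
  univ.filter fun vw => (finFunctionFinEquiv vw.1 : ℕ) = finFunctionFinEquiv vw.2 + n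

lemma sum_range_dig_eq_sum_shiftPairs {M : Type*} [AddCommMonoid M]
    (G : (Fin m → ℕ) → (Fin m → ℕ) → M) (n : ℕ) :
    ∑ i ∈ range (p ^ m - n), G (dig p m (i + n)) (dig p m i) =
      ∑ vw ∈ shiftPairs p m n, G (Fin.val ∘ vw.1) (Fin.val ∘ vw.2) := by
  refine sum_bij' (fun i hi => (finFunctionFinEquiv.symm ⟨i + n, by simp at hi; omega⟩,
      finFunctionFinEquiv.symm ⟨i, by simp at hi; omega⟩))
    (fun vw _ => finFunctionFinEquiv vw.2) ?_ ?_ ?_ ?_ ?_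
  · intro i hi
    simp only [shiftPairs, mem_filter, mem_univ, true_and, Equiv.apply_symm_apply]
  · intro vw hvw
    simp only [shiftPairs, mem_filter, mem_univ, true_and] at hvw
    have := (finFunctionFinEquiv vw.1).isLt
    simp only [mem_range]
    omega
  · intro i hi
    simp only [Equiv.apply_symm_apply]
  · intro vw hvw
    simp only [shiftPairs, mem_filter, mem_univ, true_and] at hvw
    refine Prod.ext ((Equiv.symm_apply_eq _).mpr (Fin.ext hvw.symm)) ?_
    exact finFunctionFinEquiv.symm_apply_apply _
  · intro i hi
    simp only [← dig_eq_val_comp_symm]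

end Digits

section FirstDiff

variable {m : ℕ} {α : Type*}

/-- The least `k` at which `v` and `w` differ, or `m` if they are equal. -/
noncomputable def firstDiff (v w : Fin m → α) : ℕ :=
  sInf {k | ∀ hk : k < m, v ⟨k, hk⟩ ≠ w ⟨k, hk⟩}

lemma firstDiff_le (v w : Fin m → α) : firstDiff v w ≤ m :=
  Nat.sInf_le fun h => absurd h (lt_irrefl m)

lemma eq_of_lt_firstDiff {v w : Fin m → α} {k : ℕ} (hk : k < m) (h : k < firstDiff v w) :
    v ⟨k, hk⟩ = w ⟨k, hk⟩ := by
  by_contra hne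
  exact Nat.notMem_of_lt_sInf h fun _ => hne

lemma ne_at_firstDiff {v w : Fin m → α} (h : firstDiff v w < m) :
    v ⟨firstDiff v w, h⟩ ≠ w ⟨firstDiff v w, h⟩ :=
  Nat.sInf_mem (s := {k | ∀ hk : k < m, v ⟨k, hk⟩ ≠ w ⟨k, hk⟩})
    ⟨m, fun h => absurd h (lt_irrefl m)⟩ h

lemma firstDiff_lt {v w : Fin m → α} (h : v ≠ w) : firstDiff v w < m := by
  by_contra! hm
  exact h (funext fun k => eq_of_lt_firstDiff k.isLt (k.isLt.trans_le hm))

lemma firstDiff_congr {v w v' w' : Fin m → α} (h : ∀ i, v' i = w' i ↔ v i = w i) :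
    firstDiff v' w' = firstDiff v w := by
  simp only [firstDiff, ne_eq, h]

end FirstDiff

lemma update_eq_update_iff {ι β : Type*} [DecidableEq ι] {v w : ι → β} {j : ι}
    (hj : v j = w j) (y : β) (i : ι) :
    Function.update v j y i = Function.update w j y i ↔ v i = w i := by
  rcases eq_or_ne i j with rfl | hij
  · simp [hj]
  · simp [Function.update_of_ne hij]

section PairShift

variable {p m : ℕ} (hm : 0 < m) (π : Equiv.Perm (Fin m))

noncomputable def pivot (v w : Fin m → Fin p) : Fin m :=
  π ⟨firstDiff (v ∘ π) (w ∘ π) - 1, by have := firstDiff_le (v ∘ π) (w ∘ π); omega⟩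

noncomputable def pairShift (d : Fin p) (vw : (Fin m → Fin p) × (Fin m → Fin p)) :
    (Fin m → Fin p) × (Fin m → Fin p) :=
  (Function.update vw.1 (pivot hm π vw.1 vw.2) (vw.1 (pivot hm π vw.1 vw.2) + d),
    Function.update vw.2 (pivot hm π vw.1 vw.2) (vw.1 (pivot hm π vw.1 vw.2) + d))

def headAgreePairs (n : ℕ) : Finset ((Fin m → Fin p) × (Fin m → Fin p)) :=
  (shiftPairs p m n).filter fun vw => vw.1 (π ⟨0, hm⟩) = vw.2 (π ⟨0, hm⟩)

variable {hm π} {n : ℕ} {vw : (Fin m → Fin p) × (Fin m → Fin p)}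

lemma pivot_update {v w : Fin m → Fin p} {j : Fin m} (hj : v j = w j) (y : Fin p) :
    pivot hm π (Function.update v j y) (Function.update w j y) = pivot hm π v w := by
  simp only [pivot]
  congr 3
  exact firstDiff_congr fun i => update_eq_update_iff hj y (π i)

lemma firstDiff_lt_of_mem_shiftPairs (hn : 0 < n) (hvw : vw ∈ shiftPairs p m n) :
    firstDiff (vw.1 ∘ π) (vw.2 ∘ π) < m := by
  refine firstDiff_lt fun h => ?_
  have h12 : vw.1 = vw.2 := π.surjective.injective_comp_right h
  simp only [shiftPairs, mem_filter, mem_univ, true_and, h12] at hvw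
  omega

lemma firstDiff_pos_of_mem_headAgreePairs (hvw : vw ∈ headAgreePairs hm π n) :
    0 < firstDiff (vw.1 ∘ π) (vw.2 ∘ π) := by
  refine Nat.pos_of_ne_zero fun h0 => ne_at_firstDiff (v := vw.1 ∘ π) (w := vw.2 ∘ π)
    (h0 ▸ hm) ?_
  simp only [Function.comp_apply, h0]
  exact (mem_filter.mp hvw).2

lemma eq_at_pivot (hvw : vw ∈ headAgreePairs hm π n) :
    vw.1 (pivot hm π vw.1 vw.2) = vw.2 (pivot hm π vw.1 vw.2) :=
  eq_of_lt_firstDiff (v := vw.1 ∘ π) (w := vw.2 ∘ π) _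
    (Nat.sub_one_lt_of_lt (firstDiff_pos_of_mem_headAgreePairs hvw))

lemma pairShift_mem_headAgreePairs [NeZero p] (hvw : vw ∈ headAgreePairs hm π n) (d : Fin p) :
    pairShift hm π d vw ∈ headAgreePairs hm π n := by
  have hj := eq_at_pivot hvw
  simp only [headAgreePairs, shiftPairs, mem_filter, mem_univ, true_and] at hvw ⊢
  exact ⟨finFunctionFinEquiv_update_eq_add hvw.1 hj _,
    (update_eq_update_iff hj _ _).mpr hvw.2⟩

lemma pairShift_pairShift [NeZero p] (hvw : vw ∈ headAgreePairs hm π n) (d e : Fin p) :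
    pairShift hm π e (pairShift hm π d vw) = pairShift hm π (d + e) vw := by
  have hj := eq_at_pivot hvw
  simp only [pairShift, pivot_update hj, Function.update_self, Function.update_idem, add_assoc]

lemma pairShift_zero [NeZero p] (hvw : vw ∈ headAgreePairs hm π n) :
    pairShift hm π 0 vw = vw := by
  simp only [pairShift, add_zero, Function.update_eq_self]
  rw [eq_at_pivot hvw, Function.update_eq_self]

lemma sum_headAgreePairs_pairShift [NeZero p] {M : Type*} [AddCommMonoid M]
    (f : (Fin m → Fin p) × (Fin m → Fin p) → M) (d : Fin p) :
    ∑ vw ∈ headAgreePairs hm π n, f (pairShift hm π d vw) =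
      ∑ vw ∈ headAgreePairs hm π n, f vw := by
  refine sum_nbij' (pairShift hm π d) (pairShift hm π (-d))
    (fun _ h => pairShift_mem_headAgreePairs h d) (fun _ h => pairShift_mem_headAgreePairs h _)
    (fun _ h => ?_) (fun _ h => ?_) (fun _ _ => rfl)
  · rw [pairShift_pairShift h, add_neg_cancel, pairShift_zero h]
  · rw [pairShift_pairShift h, neg_add_cancel, pairShift_zero h]

end PairShift

section SecondDifference

variable {p m lam : ℕ} {hm : 0 < m} {π : Equiv.Perm (Fin m)} {cf : Fin m → ZMod lam}
  {c : ZMod lam} {t α : ℕ}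

lemma aFun_sub_sub_of_add {v w v' w' : Fin m → ℕ} (h : Fin m → ℤ)
    (hv : ∀ i, (v' i : ℤ) = v i + h i) (hw : ∀ i, (w' i : ℤ) = w i + h i) :
    aFun p m lam hm π cf c t α v' - aFun p m lam hm π cf c t α w' -
        (aFun p m lam hm π cf c t α v - aFun p m lam hm π cf c t α w) =
      ((lam / p : ℕ) : ℤ) * ∑ β : Fin (m - 1),
        (h (π (Fin.castLE (Nat.sub_le m 1) β)) *
            ((v (π ⟨(β : ℕ) + 1, by omega⟩) : ℤ) -
              w (π ⟨(β : ℕ) + 1, by omega⟩)) +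
          ((v (π (Fin.castLE (Nat.sub_le m 1) β)) : ℤ) -
              w (π (Fin.castLE (Nat.sub_le m 1) β))) *
            h (π ⟨(β : ℕ) + 1, by omega⟩)) := by
  simp only [aFun, fQuad, hv, hw]
  simp only [add_mul, mul_add, sub_mul, mul_sub, sum_add_distrib, sum_sub_distrib, mul_sum]
  ring

lemma aFun_update_sub_update {v w : Fin m → ℕ} {k : ℕ} (hk : k + 1 < m)
    (hagree : ∀ i (hi : i ≤ k), v (π ⟨i, by omega⟩) = w (π ⟨i, by omega⟩)) (x : ℕ) :
    aFun p m lam hm π cf c t α (Function.update v (π ⟨k, by omega⟩) x) -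
        aFun p m lam hm π cf c t α (Function.update w (π ⟨k, by omega⟩) x) -
        (aFun p m lam hm π cf c t α v - aFun p m lam hm π cf c t α w) =
      ((lam / p : ℕ) : ℤ) * (((x : ℤ) - v (π ⟨k, by omega⟩)) *
        ((v (π ⟨k + 1, hk⟩) : ℤ) - w (π ⟨k + 1, hk⟩))) := by
  set j : Fin m := π ⟨k, by omega⟩
  have hj : v j = w j := hagree k le_rfl
  have hupd : ∀ u : Fin m → ℕ, u j = v j → ∀ i,
      (Function.update u j x i : ℤ) =
        u i + (Pi.single j ((x : ℤ) - v j) : Fin m → ℤ) i := by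
    intro u hu i
    rcases eq_or_ne i j with rfl | hi
    · simp [hu]
    · simp [Function.update_of_ne hi, Pi.single_eq_of_ne hi]
  rw [aFun_sub_sub_of_add _ (hupd v rfl) (hupd w hj.symm)]
  congr 1
  rw [Fintype.sum_eq_single ⟨k, by omega⟩]
  · simp [j, Fin.ext_iff]
  · intro β hβ
    have hβk : (β : ℕ) ≠ k := fun h => hβ (Fin.ext h)
    by_cases hβ1 : (β : ℕ) + 1 = k
    · have hβv :
          v (π (Fin.castLE (Nat.sub_le m 1) β)) = w (π (Fin.castLE (Nat.sub_le m 1) β)) :=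
        hagree β (by omega)
      simp [j, Fin.ext_iff, hβk, hβv]
    · simp [j, Fin.ext_iff, hβk, hβ1]

end SecondDifference

section Code

variable {p m lam : ℕ} {hm : 0 < m} {π : Equiv.Perm (Fin m)} {cf : Fin m → ZMod lam}
  {c : ZMod lam} {t : ℕ}

lemma sum_range_omg_aFun_sub (hpl : p ∣ lam) (hlam : lam ≠ 0) (v w : Fin m → Fin p) :
    ∑ α ∈ range p, omg lam ^ (aFun p m lam hm π cf c t α (Fin.val ∘ v) -
        aFun p m lam hm π cf c t α (Fin.val ∘ w)) =
      if v (π ⟨0, hm⟩) = w (π ⟨0, hm⟩) then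
        p * omg lam ^ (aFun p m lam hm π cf c t 0 (Fin.val ∘ v) -
          aFun p m lam hm π cf c t 0 (Fin.val ∘ w))
      else 0 := by
  set e : ℤ := (v (π ⟨0, hm⟩) : ℤ) - w (π ⟨0, hm⟩)
  have hα : ∀ α : ℕ, omg lam ^ (aFun p m lam hm π cf c t α (Fin.val ∘ v) -
      aFun p m lam hm π cf c t α (Fin.val ∘ w)) =
      omg lam ^ (aFun p m lam hm π cf c t 0 (Fin.val ∘ v) -
        aFun p m lam hm π cf c t 0 (Fin.val ∘ w)) * omg p ^ (e * α) := fun α => by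
    rw [← omg_zpow_div_mul hpl hlam, ← zpow_add₀ (omg_ne_zero lam)]
    congr 1
    simp only [aFun, e, Function.comp_apply]
    push_cast
    ring
  rw [sum_congr rfl fun α _ => hα α, ← mul_sum]
  split_ifs with h
  · simp [e, h, mul_comm]
  · rw [sum_range_omg_zpow_mul_eq_zero (not_dvd_natCast_sub (v _).isLt (w _).isLt
      (Fin.val_injective.ne h)), mul_zero]

lemma exists_twist_pairShift {n α : ℕ} (hpl : p ∣ lam) (hlam : lam ≠ 0) (hn : 0 < n)
    {vw : (Fin m → Fin p) × (Fin m → Fin p)} (hvw : vw ∈ headAgreePairs hm π n) :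
    ∃ e : ℤ, ¬ (p : ℤ) ∣ e ∧ ∀ d : Fin p,
      omg lam ^ (aFun p m lam hm π cf c t α (Fin.val ∘ (pairShift hm π d vw).1) -
          aFun p m lam hm π cf c t α (Fin.val ∘ (pairShift hm π d vw).2)) =
        omg lam ^ (aFun p m lam hm π cf c t α (Fin.val ∘ vw.1) -
          aFun p m lam hm π cf c t α (Fin.val ∘ vw.2)) * omg p ^ (e * d) := by
  have hbm := firstDiff_lt_of_mem_shiftPairs (π := π) hn (mem_filter.mp hvw).1
  have hb0 := firstDiff_pos_of_mem_headAgreePairs hvw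
  obtain ⟨v, w⟩ := vw
  dsimp only at hbm hb0
  obtain ⟨k, hk⟩ : ∃ k, firstDiff (v ∘ π) (w ∘ π) = k + 1 :=
    ⟨_, (Nat.succ_pred_eq_of_pos hb0).symm⟩
  have hpiv : pivot hm π v w = π ⟨k, by omega⟩ := by simp only [pivot, hk, Nat.add_sub_cancel]
  have hne := ne_at_firstDiff hbm
  simp only [hk, Function.comp_apply] at hne
  refine ⟨(v (π ⟨k + 1, by omega⟩) : ℤ) - w (π ⟨k + 1, by omega⟩),
    not_dvd_natCast_sub (v _).isLt (w _).isLt (Fin.val_injective.ne hne), fun d => ?_⟩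
  have hagree : ∀ i (hi : i ≤ k),
      (Fin.val ∘ v) (π ⟨i, by omega⟩) = (Fin.val ∘ w) (π ⟨i, by omega⟩) :=
    fun i hi => congrArg Fin.val (eq_of_lt_firstDiff (v := v ∘ π) (w := w ∘ π) _ (by omega))
  have key := aFun_update_sub_update (p := p) (lam := lam) (hm := hm) (cf := cf) (c := c) (t := t)
    (α := α) (by omega) hagree (v (π ⟨k, by omega⟩) + d : Fin p)
  simp only [Function.comp_apply] at key
  simp only [pairShift, hpiv, Function.comp_update]
  rw [eq_add_of_sub_eq' key, zpow_add₀ (omg_ne_zero lam), omg_zpow_div_mul hpl hlam]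
  congr 1
  apply omg_zpow_eq_of_dvd_sub
  have hδ := (dvd_val_add_sub (v (π ⟨k, by omega⟩)) d).mul_left
    ((v (π ⟨k + 1, by omega⟩) : ℤ) - w (π ⟨k + 1, by omega⟩))
  exact (congrArg _ (by ring)).mp hδ

variable (hm π cf c t) in
lemma codeCorr_codeC_natCast_eq_zero [NeZero p] (hpl : p ∣ lam) (hlam : lam ≠ 0) {n : ℕ}
    (hn : 0 < n) :
    codeCorr p (p ^ m) (codeC p m lam hm π cf c t) (codeC p m lam hm π cf c t) n = 0 := by
  rw [codeCorr_natCast, sum_comm]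
  simp only [codeC, conj_omg_zpow, ← zpow_add₀ (omg_ne_zero lam), ← sub_eq_add_neg]
  rw [sum_range_dig_eq_sum_shiftPairs (fun v w => ∑ α ∈ range p,
    omg lam ^ (aFun p m lam hm π cf c t α v - aFun p m lam hm π cf c t α w))]
  simp only [sum_range_omg_aFun_sub hpl hlam]
  rw [← sum_filter, ← mul_sum]
  change _ * ∑ vw ∈ headAgreePairs hm π n, _ = 0
  set F := fun vw : (Fin m → Fin p) × (Fin m → Fin p) => omg lam ^
    (aFun p m lam hm π cf c t 0 (Fin.val ∘ vw.1) -
      aFun p m lam hm π cf c t 0 (Fin.val ∘ vw.2))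
  refine mul_eq_zero_of_right _ (sum_eq_zero_of_twisted_invariance _ F (pairShift hm π)
    (by simp [NeZero.ne p]) (sum_headAgreePairs_pairShift F) fun vw hvw => ?_)
  obtain ⟨e, he, htwist⟩ := exists_twist_pairShift hpl hlam hn hvw
  exact ⟨_, htwist, by
    rw [Fin.sum_univ_eq_sum_range (fun d => omg p ^ (e * d)), sum_range_omg_zpow_mul_eq_zero he]⟩

end Code

theorem statement1_general (p : ℕ) (m : ℕ) (hm : 0 < m) (q : ℕ) (hq : 0 < q)
    (π : Equiv.Perm (Fin m)) (cf : Fin m → ZMod (Nat.lcm p q)) (c : ZMod (Nat.lcm p q))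
    (t : ℕ) (u : ℤ) (hu0 : u ≠ 0) (hu : u.natAbs < p ^ m) :
    codeCorr p (p ^ m) (codeC p m (Nat.lcm p q) hm π cf c t)
        (codeC p m (Nat.lcm p q) hm π cf c t) u = 0 := by
  have : NeZero p := ⟨by rintro rfl; simp [zero_pow hm.ne'] at hu⟩
  have hlam : Nat.lcm p q ≠ 0 := Nat.lcm_ne_zero (NeZero.ne p) hq.ne'
  rcases lt_or_gt_of_ne hu0 with hneg | hpos
  · rw [← neg_neg u, codeCorr_neg, ← Int.toNat_of_nonneg (neg_nonneg.mpr hneg.le),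
      codeCorr_codeC_natCast_eq_zero hm π cf c t (Nat.dvd_lcm_left p q) hlam (by omega), map_zero]
  · rw [← Int.toNat_of_nonneg hpos.le,
      codeCorr_codeC_natCast_eq_zero hm π cf c t (Nat.dvd_lcm_left p q) hlam (by omega)]

/-- each code `C_t^p` is a `(p, p^m)` complementary set:
the auto-correlation sum of its rows vanishes for all `0 < |u| < p^m`. -/
theorem statement1 (p : ℕ) (hp : p.Prime) (m : ℕ) (hm : 0 < m) (q : ℕ) (hq : 0 < q)
    (π : Equiv.Perm (Fin m)) (cf : Fin m → ZMod (Nat.lcm p q)) (c : ZMod (Nat.lcm p q))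
    (t : ℕ) (ht : t < p) (u : ℤ) (hu0 : u ≠ 0) (hu : u.natAbs < p ^ m) :
    codeCorr p (p ^ m) (codeC p m (Nat.lcm p q) hm π cf c t)
        (codeC p m (Nat.lcm p q) hm π cf c t) u = 0 :=
  statement1_general p m hm q hq π cf c t u hu0 hu
end

section
/- With p prime, m ≥ 1, q ≥ 1, λ = lcm(p,q), π a permutation of {1,…,m}, c_1,…,c_m, c ∈ Z_λ as in the construction, for all t, t' ∈ {0,…,p−1} the zero-shift correlation satisfies C(C_t^p, C_{t'}^p)(0) = Σ_{α=0}^{p−1} Σ_{γ=0}^{p^m−1} ω_λ^{a_t^α(γ_1,…,γ_m) − a_{t'}^α(γ_1,…,γ_m)} = p^{m+1} if t = t' and 0 if t ≠ t'. -/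
/-!
The codes `C_t^p` and `C_{t'}^p` differ only in the term `(λ/p)(t - t')·v_{π(m)}`, and
`ω_λ^{λ/p}` is a primitive `p`-th root of unity `ζ`. As `γ` runs over `[0, p^m)` each base-`p`
digit of `γ` takes every value `p^{m-1}` times, so the double sum collapses to
`p^m · Σ_{d<p} ζ^{(t-t')d}`, a geometric sum that vanishes unless `p ∣ t - t'`, i.e. `t = t'`.
Since `|ω_λ| = 1`, conjugation inverts powers of `ω_λ`, which turns the zero-shift correlation
into that double sum.
-/

open Finset

lemma norm_omg (n : ℕ) : ‖omg n‖ = 1 := by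
  simp [omg, Complex.norm_exp, Complex.div_re]

lemma isPrimitiveRoot_omg_pow_div {n d : ℕ} (hn : n ≠ 0) (hd : d ≠ 0) (hdn : d ∣ n) :
    IsPrimitiveRoot (omg n ^ (n / d)) d := by
  have h := (Complex.isPrimitiveRoot_exp n hn).pow_of_dvd (Nat.div_ne_zero_iff_of_dvd hdn |>.mpr
    ⟨hn, hd⟩) (Nat.div_dvd_of_dvd hdn)
  rwa [Nat.div_div_self hdn hn] at h

lemma aCorr_zpow_zero {z : ℂ} (hz : ‖z‖ = 1) (L : ℕ) (a b : ℕ → ℤ) :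
    aCorr L (fun i => z ^ a i) (fun i => z ^ b i) 0 = ∑ i ∈ range L, z ^ (a i - b i) := by
  have hz0 : z ≠ 0 := norm_ne_zero_iff.mp (by simp [hz])
  simp only [aCorr, le_refl, if_true, Int.toNat_zero, Nat.sub_zero, add_zero, map_zpow₀,
    ← Complex.inv_eq_conj hz, inv_zpow', ← zpow_add₀ hz0, sub_eq_add_neg]

lemma codeCorr_zpow_zero {z : ℂ} (hz : ‖z‖ = 1) (M L : ℕ) (A B : ℕ → ℕ → ℤ) :
    codeCorr M L (fun ν i => z ^ A ν i) (fun ν i => z ^ B ν i) 0 =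
      ∑ ν ∈ range M, ∑ i ∈ range L, z ^ (A ν i - B ν i) :=
  sum_congr rfl fun ν _ => aCorr_zpow_zero hz L (A ν) (B ν)

lemma sum_range_mul_eq_sum_sum {M : Type*} [AddCommMonoid M] (a b : ℕ) (f : ℕ → M) :
    ∑ i ∈ range (a * b), f i = ∑ i ∈ range a, ∑ r ∈ range b, f (i * b + r) := by
  induction a with
  | zero => simp
  | succ a ih => rw [Nat.succ_mul, sum_range_add, ih, sum_range_succ]

lemma sum_range_div_mod {M : Type*} [AddCommMonoid M] (N b P : ℕ) (g : ℕ → M) :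
    ∑ i ∈ range (N * b * P), g (i / P % b) = (N * P) • ∑ d ∈ range b, g d := by
  have hlow : ∀ i, ∑ r ∈ range P, g ((i * P + r) / P % b) = P • g (i % b) := fun i =>
    calc _ = ∑ _r ∈ range P, g (i % b) := sum_congr rfl fun r hr => by
          have hr := mem_range.mp hr
          rw [mul_comm, Nat.mul_add_div (by omega), Nat.div_eq_of_lt hr, add_zero]
      _ = P • g (i % b) := by rw [sum_const, card_range]
  have hhigh : ∀ a, ∑ d ∈ range b, g ((a * b + d) % b) = ∑ d ∈ range b, g d := fun a =>
    sum_congr rfl fun d hd => by rw [mul_comm, Nat.mul_add_mod, Nat.mod_eq_of_lt (mem_range.mp hd)]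
  simp only [sum_range_mul_eq_sum_sum, hlow, ← smul_sum, hhigh, sum_const, card_range, smul_smul,
    mul_comm P]

lemma sum_range_pow_div_pow_mod {M : Type*} [AddCommMonoid M] (b m : ℕ) {j : ℕ} (hj : j < m)
    (g : ℕ → M) : ∑ i ∈ range (b ^ m), g (i / b ^ j % b) = b ^ (m - 1) • ∑ d ∈ range b, g d := by
  have hsplit : b ^ m = b ^ (m - 1 - j) * b * b ^ j := by
    rw [← pow_succ, ← pow_add]
    congr 1
    omega
  rw [hsplit, sum_range_div_mod, ← pow_add]
  congr 2
  omega

lemma IsPrimitiveRoot.geom_sum_zpow {K : Type*} [Field K] {ζ : K} {n : ℕ}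
    (hζ : IsPrimitiveRoot ζ n) (k : ℤ) :
    ∑ d ∈ range n, (ζ ^ k) ^ d = if (n : ℤ) ∣ k then (n : K) else 0 := by
  split_ifs with hk
  · simp [(hζ.zpow_eq_one_iff_dvd k).mpr hk]
  · have hpow : (ζ ^ k) ^ n = 1 := by
      rw [← zpow_natCast, ← zpow_mul, mul_comm, zpow_mul, zpow_natCast, hζ.pow_eq_one, one_zpow]
    rw [geom_sum_eq (mt (hζ.zpow_eq_one_iff_dvd k).mp hk), hpow, sub_self, zero_div]

lemma natCast_dvd_sub_iff_eq {p t t' : ℕ} (ht : t < p) (ht' : t' < p) :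
    (p : ℤ) ∣ (t : ℤ) - t' ↔ t = t' := by
  refine ⟨fun h => ?_, fun h => by simp [h]⟩
  have := Int.eq_zero_of_abs_lt_dvd h (by rw [abs_lt]; omega)
  omega

lemma aFun_sub_aFun (p m lam : ℕ) (hm : 0 < m) (π : Equiv.Perm (Fin m)) (cf : Fin m → ZMod lam)
    (c : ZMod lam) (t t' α : ℕ) (v : Fin m → ℕ) :
    aFun p m lam hm π cf c t α v - aFun p m lam hm π cf c t' α v =
      ((lam / p : ℕ) : ℤ) * ((t : ℤ) - t') * v (π ⟨m - 1, by omega⟩) := by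
  simp only [aFun]
  ring

theorem statement2_general (p : ℕ) (m : ℕ) (hm : 0 < m) (q : ℕ) (hq : 0 < q)
    (π : Equiv.Perm (Fin m)) (cf : Fin m → ZMod (Nat.lcm p q)) (c : ZMod (Nat.lcm p q))
    (t t' : ℕ) (ht : t < p) (ht' : t' < p) :
    codeCorr p (p ^ m) (codeC p m (Nat.lcm p q) hm π cf c t)
        (codeC p m (Nat.lcm p q) hm π cf c t') 0 =
      (∑ α ∈ Finset.range p, ∑ γ ∈ Finset.range (p ^ m),
        omg (Nat.lcm p q) ^
          (aFun p m (Nat.lcm p q) hm π cf c t α (dig p m γ)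
            - aFun p m (Nat.lcm p q) hm π cf c t' α (dig p m γ))) ∧
    (∑ α ∈ Finset.range p, ∑ γ ∈ Finset.range (p ^ m),
        omg (Nat.lcm p q) ^
          (aFun p m (Nat.lcm p q) hm π cf c t α (dig p m γ)
            - aFun p m (Nat.lcm p q) hm π cf c t' α (dig p m γ))) =
      (if t = t' then (p : ℂ) ^ (m + 1) else 0) := by
  refine ⟨codeCorr_zpow_zero (norm_omg _) _ _ _ _, ?_⟩
  have hp : p ≠ 0 := by omega
  have hζ := isPrimitiveRoot_omg_pow_div (Nat.lcm_ne_zero hp hq.ne') hp (Nat.dvd_lcm_left p q)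
  simp only [aFun_sub_aFun, zpow_mul, zpow_natCast, dig,
    sum_range_pow_div_pow_mod p m (π ⟨m - 1, by omega⟩).isLt, hζ.geom_sum_zpow,
    natCast_dvd_sub_iff_eq ht ht', sum_const, card_range]
  split_ifs
  · simp only [nsmul_eq_mul, Nat.cast_pow]
    rw [← pow_succ, Nat.sub_add_cancel hm, pow_succ']
  · simp

/-- the zero-shift correlation `C(C_t^p, C_{t'}^p)(0)` equals the double
exponential sum `Σ_α Σ_γ ω_λ^{a_t^α(γ) - a_{t'}^α(γ)}`, which is `p^{m+1}` if `t = t'`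
and `0` otherwise. -/
theorem statement2 (p : ℕ) (hp : p.Prime) (m : ℕ) (hm : 0 < m) (q : ℕ) (hq : 0 < q)
    (π : Equiv.Perm (Fin m)) (cf : Fin m → ZMod (Nat.lcm p q)) (c : ZMod (Nat.lcm p q))
    (t t' : ℕ) (ht : t < p) (ht' : t' < p) :
    codeCorr p (p ^ m) (codeC p m (Nat.lcm p q) hm π cf c t)
        (codeC p m (Nat.lcm p q) hm π cf c t') 0 =
      (∑ α ∈ Finset.range p, ∑ γ ∈ Finset.range (p ^ m),
        omg (Nat.lcm p q) ^
          (aFun p m (Nat.lcm p q) hm π cf c t α (dig p m γ)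
            - aFun p m (Nat.lcm p q) hm π cf c t' α (dig p m γ))) ∧
    (∑ α ∈ Finset.range p, ∑ γ ∈ Finset.range (p ^ m),
        omg (Nat.lcm p q) ^
          (aFun p m (Nat.lcm p q) hm π cf c t α (dig p m γ)
            - aFun p m (Nat.lcm p q) hm π cf c t' α (dig p m γ))) =
      (if t = t' then (p : ℂ) ^ (m + 1) else 0) :=
  statement2_general p m hm q hq π cf c t t' ht ht'
end

section
/- With p prime, m ≥ 1, q ≥ 1, λ = lcm(p,q), π a permutation of {1,…,m}, c_1,…,c_m ∈ Z_λ as in the construction, let 2 ≤ v ≤ m and let γ, δ ∈ {0,…,p−1}^m be digit vectors with γ_{π(j)} = δ_{π(j)} for all 1 ≤ j < v. For k ∈ {1,…,p−1}, let γ^k (respectively δ^k) denote the digit vector obtained from γ (respectively δ) by replacing the entry at position π(v−1) with γ_{π(v−1)} − k mod p (respectively δ_{π(v−1)} − k mod p). Then f(γ^k) − f(δ^k) − (f(γ) − f(δ)) ≡ (λ/p)·k·(δ_{π(v)} − γ_{π(v)}) (mod λ). -/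
open Finset

/-!
Write `γ^k = γ + d` and `δ^k = δ + d`: since `γ` and `δ` agree at `π(v-1)`, both updates add the
same vector `d`, supported at `π(v-1)` with `d ≡ -k (mod p)` there. The linear part of `f` then
cancels, and the quadratic part contributes the polarization `(λ/p)·B(d, γ - δ)` of the path form
`B(x, y) = Σ_β (x_{π(β)} y_{π(β+1)} + y_{π(β)} x_{π(β+1)})`. As `γ - δ` vanishes at
`π(1), …, π(v-1)`, the only surviving term is `d_{π(v-1)} (γ - δ)_{π(v)}`.
-/

lemma fQuad_second_difference (p m lam : ℕ) (π : Equiv.Perm (Fin m)) (cf : Fin m → ZMod lam)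
    (x y x' y' : Fin m → ℕ) (d e : Fin m → ℤ)
    (hx' : ∀ a, (x' a : ℤ) = x a + d a) (hy' : ∀ a, (y' a : ℤ) = y a + d a)
    (hx : ∀ a, (x a : ℤ) = y a + e a) :
    fQuad p m lam π cf x' - fQuad p m lam π cf y' - (fQuad p m lam π cf x - fQuad p m lam π cf y)
      = ((lam / p : ℕ) : ℤ) * ∑ β : Fin (m - 1),
          (d (π (Fin.castLE (Nat.sub_le m 1) β)) * e (π ⟨(β : ℕ) + 1, by omega⟩)
            + e (π (Fin.castLE (Nat.sub_le m 1) β)) * d (π ⟨(β : ℕ) + 1, by omega⟩)) := by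
  have hquad : ∀ β : Fin (m - 1),
      ((x' (π (Fin.castLE (Nat.sub_le m 1) β)) : ℤ) * x' (π ⟨(β : ℕ) + 1, by omega⟩)
        - (y' (π (Fin.castLE (Nat.sub_le m 1) β)) : ℤ) * y' (π ⟨(β : ℕ) + 1, by omega⟩))
      - ((x (π (Fin.castLE (Nat.sub_le m 1) β)) : ℤ) * x (π ⟨(β : ℕ) + 1, by omega⟩)
        - (y (π (Fin.castLE (Nat.sub_le m 1) β)) : ℤ) * y (π ⟨(β : ℕ) + 1, by omega⟩))
      = d (π (Fin.castLE (Nat.sub_le m 1) β)) * e (π ⟨(β : ℕ) + 1, by omega⟩)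
          + e (π (Fin.castLE (Nat.sub_le m 1) β)) * d (π ⟨(β : ℕ) + 1, by omega⟩) := by
    intro β
    simp only [hx', hy', hx]
    ring
  have hlin : ∀ β : Fin m,
      ((cf β).val * (x' β : ℤ) - (cf β).val * (y' β : ℤ))
        - ((cf β).val * (x β : ℤ) - (cf β).val * (y β : ℤ)) = 0 := by
    intro β
    simp only [hx', hy', hx]
    ring
  have hlin_sum := Finset.sum_eq_zero (s := Finset.univ) fun β _ => hlin β
  unfold fQuad
  rw [← Finset.sum_congr rfl fun β _ => hquad β]
  simp only [Finset.sum_sub_distrib] at hlin_sum ⊢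
  linear_combination hlin_sum

lemma sum_adjacent_cross_eq_of_support {m : ℕ} (g h : Fin m → ℤ) (i j : Fin m)
    (hij : (j : ℕ) = i + 1) (hg : ∀ a, a ≠ i → g a = 0) (hh : ∀ a, a ≤ i → h a = 0) :
    ∑ β : Fin (m - 1), (g (Fin.castLE (Nat.sub_le m 1) β) * h ⟨(β : ℕ) + 1, by omega⟩
        + h (Fin.castLE (Nat.sub_le m 1) β) * g ⟨(β : ℕ) + 1, by omega⟩)
      = g i * h j := by
  have hi : (i : ℕ) < m - 1 := by omega
  rw [Finset.sum_eq_single ⟨i, hi⟩]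
  · have hj : (⟨(i : ℕ) + 1, by omega⟩ : Fin m) = j := Fin.ext hij.symm
    simp [hj, hh i le_rfl]
  · intro β _ hβ
    have hβi : Fin.castLE (Nat.sub_le m 1) β ≠ i := fun h => hβ (Fin.ext (by simp [← h]))
    rw [hg _ hβi, zero_mul, zero_add]
    by_cases hβ1 : (β : ℕ) + 1 = i
    · rw [hh (Fin.castLE _ β) (Fin.le_def.mpr (by simp only [Fin.val_castLE]; omega)), zero_mul]
    · rw [hg ⟨(β : ℕ) + 1, _⟩ (fun h => hβ1 (congrArg Fin.val h)), mul_zero]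
  · simp

lemma natCast_add_sub_mod_modEq (a p k : ℕ) (hkp : k ≤ p) :
    ((((a + (p - k)) % p : ℕ)) : ℤ) ≡ a - k [ZMOD p] := by
  push_cast [Nat.cast_sub hkp]
  calc ((a : ℤ) + (p - k)) % p ≡ a + (p - k) [ZMOD p] := Int.mod_modEq _ _
    _ ≡ a - k [ZMOD p] := Int.modEq_iff_dvd.mpr ⟨-1, by ring⟩

lemma Int.ModEq.natCast_div_mul_left {p L : ℕ} (hpL : p ∣ L) {a b : ℤ} (h : a ≡ b [ZMOD p]) :
    ((L / p : ℕ) : ℤ) * a ≡ ((L / p : ℕ) : ℤ) * b [ZMOD L] := by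
  have hL : ((L / p : ℕ) : ℤ) * p = L := by exact_mod_cast Nat.div_mul_cancel hpL
  simpa only [hL] using h.mul_left' (c := ((L / p : ℕ) : ℤ))

/-- for digit vectors `γ, δ` agreeing at positions `π(1),…,π(v-1)`,
and `γ^k, δ^k` obtained by subtracting `k` (mod `p`) at position `π(v-1)`,
`f(γ^k) - f(δ^k) - (f(γ) - f(δ)) ≡ (λ/p)·k·(δ_{π(v)} - γ_{π(v)}) (mod λ)`. -/
theorem statement4 (p : ℕ) (m : ℕ) (q : ℕ)
    (π : Equiv.Perm (Fin m)) (cf : Fin m → ZMod (Nat.lcm p q))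
    (v : ℕ) (hv2 : 2 ≤ v) (hvm : v ≤ m)
    (γ δ : Fin m → ℕ)
    (heq : ∀ j : Fin m, (j : ℕ) < v - 1 → γ (π j) = δ (π j))
    (k : ℕ) (hkp : k < p) :
    fQuad p m (Nat.lcm p q) π cf
        (Function.update γ (π ⟨v - 2, by omega⟩)
          ((γ (π ⟨v - 2, by omega⟩) + (p - k)) % p))
      - fQuad p m (Nat.lcm p q) π cf
        (Function.update δ (π ⟨v - 2, by omega⟩)
          ((δ (π ⟨v - 2, by omega⟩) + (p - k)) % p))
      - (fQuad p m (Nat.lcm p q) π cf γ - fQuad p m (Nat.lcm p q) π cf δ)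
      ≡ ((Nat.lcm p q / p : ℕ) : ℤ) * (k : ℤ) *
          ((δ (π ⟨v - 1, by omega⟩) : ℤ) - (γ (π ⟨v - 1, by omega⟩) : ℤ))
        [ZMOD ((Nat.lcm p q : ℕ) : ℤ)] := by
  set i : Fin m := ⟨v - 2, by omega⟩
  set j : Fin m := ⟨v - 1, by omega⟩
  have hγδ : γ (π i) = δ (π i) := heq i (by simp [i]; omega)
  set w := (δ (π i) + (p - k)) % p
  set d : Fin m → ℤ := Pi.single (π i) ((w : ℤ) - δ (π i))
  have hupd (x : Fin m → ℕ) (hx : x (π i) = δ (π i)) (a : Fin m) :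
      (Function.update x (π i) w a : ℤ) = x a + d a := by
    by_cases ha : a = π i
    · subst ha; simp [d, hx]
    · simp [d, ha]
  have hsum := sum_adjacent_cross_eq_of_support (d ∘ π) (fun a => (γ (π a) : ℤ) - δ (π a)) i j
    (by simp [i, j]; omega) (fun a ha => by simp [d, ha])
    (fun a ha => by simp [heq a (by simp [Fin.le_def, i] at ha; omega)])
  rw [hγδ, fQuad_second_difference _ _ _ π cf γ δ _ _ d (fun a => (γ a : ℤ) - δ a)
    (hupd γ hγδ) (hupd δ rfl) (fun a => by ring)]
  have hw : (w : ℤ) - δ (π i) ≡ -k [ZMOD p] := by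
    have h := (natCast_add_sub_mod_modEq (δ (π i)) p k hkp.le).sub_right (δ (π i) : ℤ)
    rwa [sub_sub_cancel_left] at h
  simp only [Function.comp_apply] at hsum
  rw [hsum]
  calc _ ≡ ((Nat.lcm p q / p : ℕ) : ℤ) * (k * ((δ (π j) : ℤ) - γ (π j))) [ZMOD (Nat.lcm p q)] := by
        refine Int.ModEq.natCast_div_mul_left (Nat.dvd_lcm_left p q) ?_
        simp only [d, Pi.single_eq_same]
        calc _ ≡ -k * ((γ (π j) : ℤ) - δ (π j)) [ZMOD p] := hw.mul_right _
          _ = k * ((δ (π j) : ℤ) - γ (π j)) := by ring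
    _ = _ := by ring
end

section
/- Let h ≥ 1, m ≥ 1, π a permutation of {1,…,m}, and c_1,…,c_m ∈ Z_{2^h}. Define the generalized Boolean function f(v_1,…,v_m) = 2^{h−1}·Σ_{α=1}^{m−1} v_{π(α)} v_{π(α+1)} + Σ_{α=1}^{m} c_α v_α (mod 2^h). Then for all constants c, c' ∈ Z_{2^h}, the pair (ψ(f + c), ψ(f + 2^{h−1} v_{π(1)} + c')) forms a (2, 2^m) Golay complementary pair: A(ψ(f+c))(u) + A(ψ(f + 2^{h−1} v_{π(1)} + c'))(u) = 0 for every integer u with 0 < |u| < 2^m. -/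
open Finset

/-!
Write `x, y` for the digit vectors of positions `i` and `i + n`. Summed over `i`, the two
autocorrelations at shift `n` become `Σ ω^(f y - f x) (1 + (-1)^(y_{π 0} - x_{π 0}))`.
A term with `x_{π 0} ≠ y_{π 0}` vanishes. Otherwise let `ν ≥ 1` be the first `π`-position where
`x` and `y` differ and flip the bit `π (ν - 1)` of `i`; since `x` and `y` agree there, this flips
the same bit of `i + n`, keeps `ν`, and changes `f y - f x` by `2^(h-1)` times an odd number,
which negates the term. This is a sign-reversing involution, so the sum is zero (Davis–Jedwab).
-/

namespace GolayDavisJedwab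

section RootOfUnity

lemma omg_ne_zero (lam : ℕ) : omg lam ≠ 0 := Complex.exp_ne_zero _

lemma conj_omg_zpow (lam : ℕ) (z : ℤ) : starRingEnd ℂ (omg lam ^ z) = omg lam ^ (-z) := by
  rw [map_zpow₀, omg, ← Complex.exp_conj, zpow_neg, ← inv_zpow, ← Complex.exp_neg]
  congr 2
  simp only [map_div₀, map_mul, Complex.conj_ofNat, Complex.conj_ofReal, Complex.conj_I, mul_neg,
    map_natCast]
  ring

lemma omg_two_pow_pow_half {h : ℕ} (hh : 0 < h) : omg (2 ^ h) ^ 2 ^ (h - 1) = -1 := by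
  have hζ := Complex.isPrimitiveRoot_exp (2 ^ h) (by positivity)
  have h2 : 2 ^ h / 2 ^ (h - 1) = 2 := by
    rw [Nat.pow_div (Nat.sub_le h 1) two_pos, Nat.sub_sub_self hh, pow_one]
  exact (h2 ▸ hζ.pow_of_dvd (by positivity) (pow_dvd_pow 2 (Nat.sub_le h 1)))
    |>.eq_neg_one_of_two_right

lemma omg_two_pow_zpow_add_half_mul {h : ℕ} (hh : 0 < h) (z : ℤ) {ε : ℤ} (hε : Odd ε) :
    omg (2 ^ h) ^ (z + 2 ^ (h - 1) * ε) = -omg (2 ^ h) ^ z := by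
  have half : omg (2 ^ h) ^ ((2 : ℤ) ^ (h - 1)) = -1 := by
    rw [← omg_two_pow_pow_half hh, ← zpow_natCast]
    push_cast
    rfl
  rw [zpow_add₀ (omg_ne_zero _), zpow_mul, half, hε.neg_one_zpow, mul_neg_one]

end RootOfUnity

section Correlation

lemma aCorr_natCast (L : ℕ) (a b : ℕ → ℂ) (n : ℕ) :
    aCorr L a b n = ∑ i ∈ range (L - n), a (i + n) * starRingEnd ℂ (b i) := by
  simp [aCorr]

lemma aCorr_neg_natCast (L : ℕ) (a b : ℕ → ℂ) {n : ℕ} (hn : 0 < n) :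
    aCorr L a b (-n) = starRingEnd ℂ (aCorr L b a n) := by
  simp [aCorr, hn.ne', map_sum, mul_comm]

lemma aCorr_omg_zpow (L lam n : ℕ) (F G : ℕ → ℤ) :
    aCorr L (fun γ => omg lam ^ F γ) (fun γ => omg lam ^ G γ) n =
      ∑ i ∈ range (L - n), omg lam ^ (F (i + n) - G i) := by
  simp only [aCorr_natCast, conj_omg_zpow, ← zpow_add₀ (omg_ne_zero _), sub_eq_add_neg]

lemma aCorr_add_aCorr_eq_zero_of_natCast {L : ℕ} {a b : ℕ → ℂ}
    (hpos : ∀ n : ℕ, 0 < n → aCorr L a a n + aCorr L b b n = 0) {u : ℤ} (hu : u ≠ 0) :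
    aCorr L a a u + aCorr L b b u = 0 := by
  have hn : 0 < u.natAbs := Int.natAbs_pos.mpr hu
  rcases Int.natAbs_eq u with hu | hu <;> rw [hu]
  · exact hpos _ hn
  · rw [aCorr_neg_natCast _ _ _ hn, aCorr_neg_natCast _ _ _ hn, ← map_add, hpos _ hn, map_zero]

end Correlation

section FlipAt

variable {m : ℕ}

def flipAt (v : Fin m → ℕ) (K : Fin m) : Fin m → ℕ :=
  Function.update v K (1 - v K)

lemma flipAt_apply_eq_iff {x y : Fin m → ℕ} {K : Fin m} (hK : x K = y K) (j : Fin m) :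
    flipAt x K j = flipAt y K j ↔ x j = y j := by
  by_cases hj : j = K
  · subst hj
    simp [flipAt, hK]
  · simp [flipAt, hj]

lemma cast_flipAt_apply {v : Fin m → ℕ} {K : Fin m} (hv : v K ≤ 1) (j : Fin m) :
    ((flipAt v K j : ℕ) : ℤ) = if j = K then 1 - (v K : ℤ) else v j := by
  by_cases hj : j = K
  · subst hj
    simp [flipAt, Nat.cast_sub hv]
  · simp [flipAt, hj]

lemma cast_flipAt_perm_apply {v : Fin m → ℕ} (π : Equiv.Perm (Fin m)) {M : Fin m}
    (hv : v (π M) ≤ 1) (j : Fin m) :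
    ((flipAt v (π M) (π j) : ℕ) : ℤ) = if j = M then 1 - (v (π M) : ℤ) else v (π j) := by
  simp only [cast_flipAt_apply hv, π.injective.eq_iff]

lemma sum_mul_flipAt (a : Fin m → ℤ) {v : Fin m → ℕ} {K : Fin m} (hv : v K ≤ 1) :
    ∑ j, a j * (flipAt v K j : ℤ) = ∑ j, a j * (v j : ℤ) + a K * (1 - 2 * (v K : ℤ)) := by
  have hterm : ∀ j, a j * (flipAt v K j : ℤ) =
      a j * (v j : ℤ) + if j = K then a K * (1 - 2 * (v K : ℤ)) else 0 := by
    intro j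
    rw [cast_flipAt_apply hv]
    split_ifs with hj
    · subst hj
      ring
    · ring
  simp [hterm, sum_add_distrib]

end FlipAt

section Bits

lemma xor_two_pow_of_testBit_false {γ k : ℕ} (hγ : γ.testBit k = false) :
    γ ^^^ 2 ^ k = γ + 2 ^ k := by
  have heven : Even (γ / 2 ^ k) := by
    rw [Nat.even_iff, ← Nat.toNat_testBit, hγ, Bool.toNat_false]
  rw [← Nat.div_add_mod (γ ^^^ 2 ^ k) (2 ^ k), Nat.xor_div_two_pow, Nat.xor_mod_two_pow,
    Nat.div_self (Nat.two_pow_pos k), Nat.mod_self, Nat.xor_zero, Nat.xor_one_of_even heven]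
  conv_rhs => rw [← Nat.div_add_mod γ (2 ^ k)]
  ring

lemma xor_two_pow_add {γ k n : ℕ} (hγ : γ.testBit k = (γ + n).testBit k) :
    (γ ^^^ 2 ^ k) + n = (γ + n) ^^^ 2 ^ k := by
  cases hb : γ.testBit k
  · rw [xor_two_pow_of_testBit_false hb, xor_two_pow_of_testBit_false (hγ ▸ hb)]
    ring
  · have e₁ := xor_two_pow_of_testBit_false (γ := γ ^^^ 2 ^ k) (k := k) (by simp [hb])
    have e₂ :=
      xor_two_pow_of_testBit_false (γ := (γ + n) ^^^ 2 ^ k) (k := k) (by simp [← hγ, hb])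
    rw [Nat.xor_xor_cancel_right] at e₁ e₂
    omega

lemma dig_two_apply (m γ : ℕ) (j : Fin m) : dig 2 m γ j = (γ.testBit j).toNat :=
  (Nat.toNat_testBit γ j).symm

lemma dig_two_le_one (m γ : ℕ) (j : Fin m) : dig 2 m γ j ≤ 1 := by
  rw [dig_two_apply]
  exact Bool.toNat_le _

lemma testBit_eq_of_dig_two_eq {m γ δ : ℕ} {j : Fin m} (h : dig 2 m γ j = dig 2 m δ j) :
    γ.testBit j = δ.testBit j := by
  have h' : γ / 2 ^ (j : ℕ) % 2 = δ / 2 ^ (j : ℕ) % 2 := h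
  simp only [Nat.testBit_eq_decide_div_mod_eq, h']

lemma eq_of_dig_two_eq {m γ δ : ℕ} (hγ : γ < 2 ^ m) (hδ : δ < 2 ^ m)
    (h : dig 2 m γ = dig 2 m δ) : γ = δ := by
  refine Nat.eq_of_testBit_eq fun i => ?_
  by_cases hi : i < m
  · exact testBit_eq_of_dig_two_eq (j := ⟨i, hi⟩) (congrFun h _)
  · have hm : 2 ^ m ≤ 2 ^ i := Nat.pow_le_pow_right two_pos (by omega)
    rw [Nat.testBit_lt_two_pow (hγ.trans_le hm), Nat.testBit_lt_two_pow (hδ.trans_le hm)]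

lemma dig_two_xor_two_pow (m γ : ℕ) (K : Fin m) :
    dig 2 m (γ ^^^ 2 ^ (K : ℕ)) = flipAt (dig 2 m γ) K := by
  funext j
  by_cases hj : j = K
  · subst hj
    cases hb : γ.testBit j <;> simp [flipAt, dig_two_apply, hb]
  · have hj' : (K : ℕ) ≠ j := fun e => hj (Fin.ext e.symm)
    simp [flipAt, dig_two_apply, hj, hj']

end Bits

section FirstDiff

variable {m : ℕ} (π : Equiv.Perm (Fin m))

noncomputable def firstDiff (x y : Fin m → ℕ) : ℕ :=
  sInf {b | ∃ j : Fin m, (j : ℕ) = b ∧ x (π j) ≠ y (π j)}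

variable {π}

lemma exists_firstDiff {x y : Fin m → ℕ} (hne : x ≠ y) :
    ∃ j : Fin m, (j : ℕ) = firstDiff π x y ∧ x (π j) ≠ y (π j) := by
  obtain ⟨j, hj⟩ := Function.ne_iff.mp hne
  have hmem : (π.symm j : ℕ) ∈ {b | ∃ j : Fin m, (j : ℕ) = b ∧ x (π j) ≠ y (π j)} :=
    ⟨π.symm j, rfl, by simpa using hj⟩
  exact Nat.sInf_mem ⟨_, hmem⟩

lemma apply_eq_of_lt_firstDiff {x y : Fin m → ℕ} {j : Fin m}
    (hj : (j : ℕ) < firstDiff π x y) : x (π j) = y (π j) := by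
  by_contra hne
  exact Nat.notMem_of_lt_sInf hj ⟨j, rfl, hne⟩

lemma firstDiff_flipAt {x y : Fin m → ℕ} {K : Fin m} (hK : x K = y K) :
    firstDiff π (flipAt x K) (flipAt y K) = firstDiff π x y := by
  simp only [firstDiff, ne_eq, flipAt_apply_eq_iff hK]

lemma firstDiff_lt {x y : Fin m → ℕ} (hne : x ≠ y) : firstDiff π x y < m := by
  obtain ⟨j, hj, -⟩ := exists_firstDiff (π := π) hne
  exact hj ▸ j.isLt

end FirstDiff

def pathSum {m : ℕ} (π : Equiv.Perm (Fin m)) (v : Fin m → ℕ) : ℤ :=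
  ∑ β : Fin (m - 1),
    (v (π (Fin.castLE (Nat.sub_le m 1) β)) : ℤ) * (v (π ⟨β + 1, by omega⟩) : ℤ)

lemma fQuad_two_eq {m lam : ℕ} (π : Equiv.Perm (Fin m)) (cf : Fin m → ZMod lam)
    (v : Fin m → ℕ) :
    fQuad 2 m lam π cf v = ((lam / 2 : ℕ) : ℤ) * pathSum π v + ∑ β, ((cf β).val : ℤ) * (v β : ℤ) :=
  rfl

/-- Flipping `v` at `π M` changes `pathSum π v` by `(1 - 2 v_{π M}) (v_{π (M-1)} + v_{π (M+1)})`;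
the `π (M-1)` contributions of `x` and `y` cancel. -/
lemma pathSum_flipAt_sub_flipAt {m : ℕ} (π : Equiv.Perm (Fin m)) {x y : Fin m → ℕ} {M N : Fin m}
    (hMN : (N : ℕ) = M + 1) (hagree : ∀ j : Fin m, j ≤ M → x (π j) = y (π j))
    (hx : x (π M) ≤ 1) :
    pathSum π (flipAt y (π M)) - pathSum π (flipAt x (π M)) =
      pathSum π y - pathSum π x + (1 - 2 * (x (π M) : ℤ)) * ((y (π N) : ℤ) - x (π N)) := by
  have hK : x (π M) = y (π M) := hagree M le_rfl
  have hy : y (π M) ≤ 1 := hK ▸ hx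
  rw [← sub_eq_iff_eq_add', pathSum, pathSum, pathSum, pathSum, ← sum_sub_distrib,
    ← sum_sub_distrib, ← sum_sub_distrib, sum_eq_single ⟨M, by omega⟩]
  · have hN : (⟨M + 1, by omega⟩ : Fin m) = N := Fin.ext hMN.symm
    have hNM : N ≠ M := fun e => by rw [e] at hMN; omega
    simp only [cast_flipAt_perm_apply π hx, cast_flipAt_perm_apply π hy, Fin.castLE_mk,
      hN, hNM, if_true, if_false]
    rw [hK]
    ring
  · intro β _ hβ
    have hβM : Fin.castLE (Nat.sub_le m 1) β ≠ M := fun e => hβ (Fin.ext (by simp [← e]))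
    simp only [cast_flipAt_perm_apply π hx, cast_flipAt_perm_apply π hy, hβM, if_false]
    split_ifs with hsucc
    · have hprev : Fin.castLE (Nat.sub_le m 1) β ≤ M := by
        rw [Fin.le_iff_val_le_val, ← hsucc]
        simp
      rw [hsucc, hK, hagree _ hprev]
      ring
    · ring
  · simp

lemma fQuad_flipAt_sub_flipAt {m lam : ℕ} (π : Equiv.Perm (Fin m)) (cf : Fin m → ZMod lam)
    {x y : Fin m → ℕ} {M N : Fin m} (hMN : (N : ℕ) = M + 1)
    (hagree : ∀ j : Fin m, j ≤ M → x (π j) = y (π j)) (hx : x (π M) ≤ 1) :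
    fQuad 2 m lam π cf (flipAt y (π M)) - fQuad 2 m lam π cf (flipAt x (π M)) =
      fQuad 2 m lam π cf y - fQuad 2 m lam π cf x +
        ((lam / 2 : ℕ) : ℤ) * ((1 - 2 * (x (π M) : ℤ)) * ((y (π N) : ℤ) - x (π N))) := by
  have hK : x (π M) = y (π M) := hagree M le_rfl
  simp only [fQuad_two_eq, sum_mul_flipAt _ hx, sum_mul_flipAt _ (hK ▸ hx), ← hK]
  linear_combination ((lam / 2 : ℕ) : ℤ) * pathSum_flipAt_sub_flipAt π hMN hagree hx

section PairTerm

variable {h m : ℕ} (hm : 0 < m) (π : Equiv.Perm (Fin m)) (cf : Fin m → ZMod (2 ^ h))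

noncomputable def pairTerm (x y : Fin m → ℕ) : ℂ :=
  omg (2 ^ h) ^ (fQuad 2 m (2 ^ h) π cf y - fQuad 2 m (2 ^ h) π cf x) +
    omg (2 ^ h) ^ (fQuad 2 m (2 ^ h) π cf y - fQuad 2 m (2 ^ h) π cf x +
      2 ^ (h - 1) * ((y (π ⟨0, hm⟩) : ℤ) - x (π ⟨0, hm⟩)))

variable {π}

lemma pairTerm_of_apply_eq {x y : Fin m → ℕ} (h0 : x (π ⟨0, hm⟩) = y (π ⟨0, hm⟩)) :
    pairTerm hm π cf x y =
      2 * omg (2 ^ h) ^ (fQuad 2 m (2 ^ h) π cf y - fQuad 2 m (2 ^ h) π cf x) := by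
  rw [pairTerm, h0, sub_self, mul_zero, add_zero, two_mul]

variable (hh : 0 < h) {x y : Fin m → ℕ} (hx : ∀ j, x j ≤ 1) (hy : ∀ j, y j ≤ 1)
include hh hx hy

lemma pairTerm_eq_zero_of_firstDiff_eq_zero (hne : x ≠ y) (h0 : firstDiff π x y = 0) :
    pairTerm hm π cf x y = 0 := by
  obtain ⟨N, hN, hxyN⟩ := exists_firstDiff (π := π) hne
  rw [show N = ⟨0, hm⟩ from Fin.ext (hN.trans h0)] at hxyN
  have hodd : Odd ((y (π ⟨0, hm⟩) : ℤ) - x (π ⟨0, hm⟩)) := by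
    have := hx (π ⟨0, hm⟩)
    have := hy (π ⟨0, hm⟩)
    rw [Int.odd_iff]
    omega
  rw [pairTerm, omg_two_pow_zpow_add_half_mul hh _ hodd, add_neg_cancel]

lemma pairTerm_flipAt (hne : x ≠ y) {M : Fin m} (hM : (M : ℕ) + 1 = firstDiff π x y) :
    pairTerm hm π cf (flipAt x (π M)) (flipAt y (π M)) = -pairTerm hm π cf x y := by
  obtain ⟨N, hN, hxyN⟩ := exists_firstDiff (π := π) hne
  have hagree : ∀ j ≤ M, x (π j) = y (π j) := fun j hj =>
    apply_eq_of_lt_firstDiff (by rw [Fin.le_iff_val_le_val] at hj; omega)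
  have h0 : x (π ⟨0, hm⟩) = y (π ⟨0, hm⟩) := apply_eq_of_lt_firstDiff (by simp; omega)
  have hodd : Odd ((1 - 2 * (x (π M) : ℤ)) * ((y (π N) : ℤ) - x (π N))) := by
    have := hx (π M)
    have := hx (π N)
    have := hy (π N)
    refine Int.odd_mul.mpr ⟨?_, ?_⟩ <;> rw [Int.odd_iff] <;> omega
  have hhalf : ((2 ^ h / 2 : ℕ) : ℤ) = 2 ^ (h - 1) := by
    rw [Nat.div_eq_of_eq_mul_left two_pos (by rw [← pow_succ, Nat.sub_add_cancel hh])]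
    push_cast
    rfl
  rw [pairTerm_of_apply_eq hm cf h0,
    pairTerm_of_apply_eq hm cf ((flipAt_apply_eq_iff (hagree M le_rfl) _).mpr h0),
    fQuad_flipAt_sub_flipAt π cf (N := N) (by omega) hagree (hx _), hhalf,
    omg_two_pow_zpow_add_half_mul hh _ hodd, mul_neg]

end PairTerm

section Partner

variable {m : ℕ} (π : Equiv.Perm (Fin m)) (n : ℕ) {i : ℕ}

/-- The bound `≤ m` only serves to make `firstDiff … - 1` an index in `Fin m`; it holds whenever
the digits of `i` and `i + n` differ. -/
noncomputable def partner (i : ℕ) : ℕ :=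
  if hν : 0 < firstDiff π (dig 2 m i) (dig 2 m (i + n)) ∧
      firstDiff π (dig 2 m i) (dig 2 m (i + n)) ≤ m then
    i ^^^ 2 ^ (π ⟨firstDiff π (dig 2 m i) (dig 2 m (i + n)) - 1, by omega⟩ : ℕ)
  else i

variable {π n}

lemma partner_of_firstDiff_eq_zero (h0 : firstDiff π (dig 2 m i) (dig 2 m (i + n)) = 0) :
    partner π n i = i :=
  dif_neg (by omega)

lemma partner_eq_xor {M : Fin m}
    (hM : (M : ℕ) + 1 = firstDiff π (dig 2 m i) (dig 2 m (i + n))) :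
    partner π n i = i ^^^ 2 ^ (π M : ℕ) := by
  have hMm := M.isLt
  rw [partner, dif_pos (by omega)]
  congr 4
  exact Fin.ext (by simp only; omega)

lemma exists_partner_eq_xor (hne : dig 2 m i ≠ dig 2 m (i + n))
    (hpos : 0 < firstDiff π (dig 2 m i) (dig 2 m (i + n))) :
    ∃ M : Fin m, (M : ℕ) + 1 = firstDiff π (dig 2 m i) (dig 2 m (i + n)) ∧
      partner π n i = i ^^^ 2 ^ (π M : ℕ) := by
  obtain ⟨ν, hν⟩ := Nat.exists_eq_add_one_of_ne_zero hpos.ne'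
  have hlt := firstDiff_lt (π := π) hne
  exact ⟨⟨ν, by omega⟩, hν.symm, partner_eq_xor hν.symm⟩

lemma xor_add_eq_add_xor {M : Fin m}
    (hM : (M : ℕ) + 1 = firstDiff π (dig 2 m i) (dig 2 m (i + n))) :
    (i ^^^ 2 ^ (π M : ℕ)) + n = (i + n) ^^^ 2 ^ (π M : ℕ) :=
  xor_two_pow_add (testBit_eq_of_dig_two_eq (apply_eq_of_lt_firstDiff (by omega)))

lemma firstDiff_xor {M : Fin m}
    (hM : (M : ℕ) + 1 = firstDiff π (dig 2 m i) (dig 2 m (i + n))) :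
    firstDiff π (dig 2 m (i ^^^ 2 ^ (π M : ℕ))) (dig 2 m ((i ^^^ 2 ^ (π M : ℕ)) + n)) =
      firstDiff π (dig 2 m i) (dig 2 m (i + n)) := by
  rw [xor_add_eq_add_xor hM, dig_two_xor_two_pow, dig_two_xor_two_pow,
    firstDiff_flipAt (apply_eq_of_lt_firstDiff (by omega))]

variable (hne : dig 2 m i ≠ dig 2 m (i + n))
include hne

lemma partner_partner : partner π n (partner π n i) = i := by
  rcases Nat.eq_zero_or_pos (firstDiff π (dig 2 m i) (dig 2 m (i + n))) with h0 | hpos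
  · rw [partner_of_firstDiff_eq_zero h0, partner_of_firstDiff_eq_zero h0]
  · obtain ⟨M, hM, hp⟩ := exists_partner_eq_xor hne hpos
    rw [hp, partner_eq_xor (hM.trans (firstDiff_xor hM).symm), Nat.xor_xor_cancel_right]

lemma partner_add_lt (hi : i + n < 2 ^ m) : partner π n i + n < 2 ^ m := by
  rcases Nat.eq_zero_or_pos (firstDiff π (dig 2 m i) (dig 2 m (i + n))) with h0 | hpos
  · rwa [partner_of_firstDiff_eq_zero h0]
  · obtain ⟨M, hM, hp⟩ := exists_partner_eq_xor hne hpos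
    rw [hp, xor_add_eq_add_xor hM]
    exact Nat.xor_lt_two_pow hi (Nat.pow_lt_pow_right one_lt_two (π M).isLt)

lemma partner_ne_self (hpos : 0 < firstDiff π (dig 2 m i) (dig 2 m (i + n))) :
    partner π n i ≠ i := by
  obtain ⟨M, -, hp⟩ := exists_partner_eq_xor hne hpos
  rw [hp]
  intro hfix
  have := Nat.xor_xor_cancel_left i (2 ^ (π M : ℕ))
  rw [hfix, Nat.xor_self] at this
  exact (Nat.two_pow_pos _).ne' this.symm

lemma pairTerm_partner {h : ℕ} (hh : 0 < h) (hm : 0 < m) (cf : Fin m → ZMod (2 ^ h)) :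
    pairTerm hm π cf (dig 2 m (partner π n i)) (dig 2 m (partner π n i + n)) =
      -pairTerm hm π cf (dig 2 m i) (dig 2 m (i + n)) := by
  rcases Nat.eq_zero_or_pos (firstDiff π (dig 2 m i) (dig 2 m (i + n))) with h0 | hpos
  · rw [partner_of_firstDiff_eq_zero h0, pairTerm_eq_zero_of_firstDiff_eq_zero hm cf hh
      (dig_two_le_one m i) (dig_two_le_one m (i + n)) hne h0, neg_zero]
  · obtain ⟨M, hM, hp⟩ := exists_partner_eq_xor hne hpos
    rw [hp, xor_add_eq_add_xor hM, dig_two_xor_two_pow, dig_two_xor_two_pow]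
    exact pairTerm_flipAt hm cf hh (dig_two_le_one m i) (dig_two_le_one m (i + n)) hne hM

end Partner

lemma sum_pairTerm_eq_zero {h m n : ℕ} (hh : 0 < h) (hm : 0 < m) (π : Equiv.Perm (Fin m))
    (cf : Fin m → ZMod (2 ^ h)) (hn : 0 < n) :
    ∑ i ∈ range (2 ^ m - n), pairTerm hm π cf (dig 2 m i) (dig 2 m (i + n)) = 0 := by
  have hne : ∀ i ∈ range (2 ^ m - n), dig 2 m i ≠ dig 2 m (i + n) := fun i hi e => by
    have hi := mem_range.mp hi
    have := eq_of_dig_two_eq (by omega) (by omega) e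
    omega
  refine sum_involution (fun i _ => partner π n i) (fun i hi => ?_) (fun i hi hT => ?_)
    (fun i hi => ?_) (fun i hi => partner_partner (hne i hi))
  · rw [pairTerm_partner (hne i hi) hh hm cf, add_neg_cancel]
  · rcases Nat.eq_zero_or_pos (firstDiff π (dig 2 m i) (dig 2 m (i + n))) with h0 | hpos
    · exact absurd (pairTerm_eq_zero_of_firstDiff_eq_zero hm cf hh (dig_two_le_one m i)
        (dig_two_le_one m (i + n)) (hne i hi) h0) hT
    · exact partner_ne_self (hne i hi) hpos
  · have hi' := mem_range.mp hi
    have := partner_add_lt (π := π) (hne i hi) (by omega)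
    exact mem_range.mpr (by omega)

end GolayDavisJedwab

open GolayDavisJedwab

theorem statement7_general (h : ℕ) (hh : 0 < h) (m : ℕ) (hm : 0 < m)
    (π : Equiv.Perm (Fin m)) (cf : Fin m → ZMod (2 ^ h)) (c c' : ZMod (2 ^ h))
    (u : ℤ) (hu0 : u ≠ 0) :
    aCorr (2 ^ m)
        (fun γ => omg (2 ^ h) ^ (fQuad 2 m (2 ^ h) π cf (dig 2 m γ) + ((c.val : ℕ) : ℤ)))
        (fun γ => omg (2 ^ h) ^ (fQuad 2 m (2 ^ h) π cf (dig 2 m γ) + ((c.val : ℕ) : ℤ))) u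
      + aCorr (2 ^ m)
          (fun γ => omg (2 ^ h) ^ (fQuad 2 m (2 ^ h) π cf (dig 2 m γ)
            + (2 : ℤ) ^ (h - 1) * (dig 2 m γ (π ⟨0, hm⟩) : ℤ) + ((c'.val : ℕ) : ℤ)))
          (fun γ => omg (2 ^ h) ^ (fQuad 2 m (2 ^ h) π cf (dig 2 m γ)
            + (2 : ℤ) ^ (h - 1) * (dig 2 m γ (π ⟨0, hm⟩) : ℤ) + ((c'.val : ℕ) : ℤ))) u
      = 0 := by
  refine aCorr_add_aCorr_eq_zero_of_natCast (fun n hn => ?_) hu0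
  rw [aCorr_omg_zpow, aCorr_omg_zpow, ← sum_add_distrib, ← sum_pairTerm_eq_zero hh hm π cf hn]
  refine sum_congr rfl fun i _ => ?_
  rw [pairTerm]
  congr 2 <;> ring

/-- GDJ: for the generalized Boolean function
`f = 2^{h-1}·Σ v_{π(α)}v_{π(α+1)} + Σ c_α v_α`, the pair
`(ψ(f + c), ψ(f + 2^{h-1} v_{π(1)} + c'))` is a `(2, 2^m)` Golay complementary pair. -/
theorem statement7 (h : ℕ) (hh : 0 < h) (m : ℕ) (hm : 0 < m)
    (π : Equiv.Perm (Fin m)) (cf : Fin m → ZMod (2 ^ h)) (c c' : ZMod (2 ^ h))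
    (u : ℤ) (hu0 : u ≠ 0) (hu : u.natAbs < 2 ^ m) :
    aCorr (2 ^ m)
        (fun γ => omg (2 ^ h) ^ (fQuad 2 m (2 ^ h) π cf (dig 2 m γ) + ((c.val : ℕ) : ℤ)))
        (fun γ => omg (2 ^ h) ^ (fQuad 2 m (2 ^ h) π cf (dig 2 m γ) + ((c.val : ℕ) : ℤ))) u
      + aCorr (2 ^ m)
          (fun γ => omg (2 ^ h) ^ (fQuad 2 m (2 ^ h) π cf (dig 2 m γ)
            + (2 : ℤ) ^ (h - 1) * (dig 2 m γ (π ⟨0, hm⟩) : ℤ) + ((c'.val : ℕ) : ℤ)))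
          (fun γ => omg (2 ^ h) ^ (fQuad 2 m (2 ^ h) π cf (dig 2 m γ)
            + (2 : ℤ) ^ (h - 1) * (dig 2 m γ (π ⟨0, hm⟩) : ℤ) + ((c'.val : ℕ) : ℤ))) u
      = 0 :=
  statement7_general h hh m hm π cf c c' u hu0
end

section
/- Let {C_μ : μ = 0,…,K−1} be a family of M×L complex matrices forming a (K,M,L)-MOGCS (i.e., K ≤ M, Σ-row autocorrelations vanish for 0 < |u| < L, and cross-correlation sums between distinct codes vanish for all |u| < L), and let {D_ν : ν = 0,…,K₁−1} be M₁×L₁ complex matrices forming a (K₁,M₁,L₁)-MOGCS. Then the family {C_μ ⊗ D_ν : 0 ≤ μ ≤ K−1, 0 ≤ ν ≤ K₁−1} of KK₁ matrices, each of size (MM₁)×(LL₁) given by the matrix Kronecker product, satisfies: C(C_μ ⊗ D_ν, C_μ ⊗ D_ν)(u) = 0 for all 0 < |u| < LL₁, and C(C_μ ⊗ D_ν, C_{μ'} ⊗ D_{ν'})(u) = 0 for all |u| < LL₁ whenever (μ,ν) ≠ (μ',ν'). In particular, if K = M and K₁ = M₁ then {C_μ ⊗ D_ν} forms a (KK₁,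 KK₁, LL₁)-CCC. -/
open Finset

/-- Kronecker product of an `M × L` matrix with an `M₁ × L₁` matrix:
`(C ⊗ D)_{(i·M₁+i'),(j·L₁+j')} = C_{i,j} · D_{i',j'}`. -/
noncomputable def kron (M₁ L₁ : ℕ) (C D : ℕ → ℕ → ℂ) : ℕ → ℕ → ℂ :=
  fun i j => C (i / M₁) (j / L₁) * D (i % M₁) (j % L₁)

/-!
Every correlation sum is a sum `diagSum L F u` along the `u`-th diagonal of the array
`F i j = ∑_ν c_ν(i) conj(d_ν(j))`, and for Kronecker products this array factors as
`F (i / L₁) (j / L₁) * G (i % L₁) (j % L₁)`. Write `u = s L₁ + t` with `0 ≤ t < L₁`: the shift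
`u` from position `p' L₁ + q'` to `p L₁ + q` splits as `(p - p', q - q') = (s, t)` or
`(s + 1, t - L₁)`, so
`C(C ⊗ D, C' ⊗ D')(u) = C(C, C')(s) C(D, D')(t) + C(C, C')(s + 1) C(D, D')(t - L₁)`.
If the pairs of codes differ, one factor of each term is a vanishing cross-correlation; if they
agree and `u ≠ 0`, then neither `(s, t)` nor `(s + 1, t - L₁)` is `(0, 0)`, so each term contains
an out-of-phase autocorrelation.
-/

open ComplexConjugate

def diagSum {R : Type*} [AddCommMonoid R] (L : ℕ) (F : ℕ → ℕ → R) (u : ℤ) : R :=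
  ∑ i ∈ range L, ∑ j ∈ range L, if (i : ℤ) = j + u then F i j else 0

theorem Nat.mul_add_div_of_lt {p q n : ℕ} (h : q < n) : (p * n + q) / n = p := by
  rw [Nat.mul_comm, Nat.mul_add_div (by omega), Nat.div_eq_of_lt h, add_zero]

theorem sum_range_mul {β : Type*} [AddCommMonoid β] (m n : ℕ) (f : ℕ → β) :
    ∑ i ∈ range (m * n), f i = ∑ p ∈ range m, ∑ q ∈ range n, f (p * n + q) := by
  induction m with
  | zero => simp
  | succ m ih => rw [Nat.succ_mul, sum_range_add, ih, sum_range_succ]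

theorem sum_range_sub_eq_sum_ite {β : Type*} [AddCommMonoid β] (L n : ℕ) (f : ℕ → β) :
    ∑ i ∈ range (L - n), f i = ∑ i ∈ range L, if i + n ∈ range L then f i else 0 := by
  rw [← sum_filter]
  congr 1
  ext i
  simp only [mem_range, mem_filter]
  omega

theorem Int.mul_add_eq_mul_add_add_iff {n p q p' q' s t : ℤ} (hq : 0 ≤ q) (hqn : q < n)
    (hq' : 0 ≤ q') (hq'n : q' < n) (ht : 0 ≤ t) (htn : t < n) :
    p * n + q = p' * n + q' + (s * n + t) ↔
      p = p' + s ∧ q = q' + t ∨ p = p' + (s + 1) ∧ q = q' + (t - n) := by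
  constructor
  · intro h
    have hk : (p - p' - s) * n = q' + t - q := by linarith
    have hlo : -1 < p - p' - s := by
      by_contra! hk'
      nlinarith
    have hhi : p - p' - s < 2 := by
      by_contra! hk'
      nlinarith
    obtain hk0 | hk1 : p - p' - s = 0 ∨ p - p' - s = 1 := by omega
    · rw [hk0, zero_mul] at hk
      left; constructor <;> linarith
    · rw [hk1, one_mul] at hk
      right; constructor <;> linarith
  · rintro (⟨rfl, rfl⟩ | ⟨rfl, rfl⟩) <;> ring

theorem ite_mul_add_eq_mul_add_add {R : Type*} [Semiring R] {n p q p' q' s t : ℤ} (hq : 0 ≤ q)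
    (hqn : q < n) (hq' : 0 ≤ q') (hq'n : q' < n) (ht : 0 ≤ t) (htn : t < n) (x y : R) :
    (if p * n + q = p' * n + q' + (s * n + t) then x * y else 0) =
      (if p = p' + s then x else 0) * (if q = q' + t then y else 0) +
        (if p = p' + (s + 1) then x else 0) * (if q = q' + (t - n) then y else 0) := by
  simp only [Int.mul_add_eq_mul_add_add_iff hq hqn hq' hq'n ht htn]
  by_cases h₁ : q = q' + t
  · have h₂ : q ≠ q' + (t - n) := by omega
    by_cases p = p' + s <;> simp_all
  · by_cases h₂ : q = q' + (t - n) <;> by_cases p = p' + (s + 1) <;> simp_all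

theorem diagSum_eq_zero_of_le {R : Type*} [AddCommMonoid R] {L : ℕ} (F : ℕ → ℕ → R) {u : ℤ}
    (h : L ≤ u.natAbs) : diagSum L F u = 0 :=
  sum_eq_zero fun i hi => sum_eq_zero fun j hj => if_neg <| by
    simp only [mem_range] at hi hj; omega

theorem diagSum_sum {R ι : Type*} [AddCommMonoid R] (s : Finset ι) (L : ℕ) (F : ι → ℕ → ℕ → R)
    (u : ℤ) : diagSum L (fun i j => ∑ k ∈ s, F k i j) u = ∑ k ∈ s, diagSum L (F k) u := by
  simp only [diagSum, ite_sum_zero]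
  rw [sum_comm (s := s)]
  exact sum_congr rfl fun i _ => sum_comm

theorem diagSum_kron {R : Type*} [Semiring R] (L L₁ : ℕ) (F G : ℕ → ℕ → R) (u : ℤ) :
    diagSum (L * L₁) (fun i j => F (i / L₁) (j / L₁) * G (i % L₁) (j % L₁)) u =
      diagSum L F (u / L₁) * diagSum L₁ G (u % L₁) +
        diagSum L F (u / L₁ + 1) * diagSum L₁ G (u % L₁ - L₁) := by
  set s := u / L₁
  set t := u % L₁
  have hu : u = s * L₁ + t := (Int.ediv_mul_add_emod u L₁).symm
  calc _ = ∑ p ∈ range L, ∑ q ∈ range L₁, ∑ p' ∈ range L, ∑ q' ∈ range L₁,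
        if (p : ℤ) * L₁ + q = p' * L₁ + q' + (s * L₁ + t) then F p p' * G q q' else 0 := by
        rw [diagSum, sum_range_mul]
        refine sum_congr rfl fun p _ => sum_congr rfl fun q hq => ?_
        rw [sum_range_mul]
        refine sum_congr rfl fun p' _ => sum_congr rfl fun q' hq' => ?_
        rw [mem_range] at hq hq'
        simp only [Nat.mul_add_div_of_lt, Nat.mul_add_mod_of_lt, hq, hq', ← hu]
        push_cast
        rfl
    _ = ∑ p ∈ range L, ∑ q ∈ range L₁, ∑ p' ∈ range L, ∑ q' ∈ range L₁,
        ((if (p : ℤ) = p' + s then F p p' else 0) * (if (q : ℤ) = q' + t then G q q' else 0) +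
          (if (p : ℤ) = p' + (s + 1) then F p p' else 0) *
            (if (q : ℤ) = q' + (t - L₁) then G q q' else 0)) := by
        refine sum_congr rfl fun p _ => sum_congr rfl fun q hq => sum_congr rfl fun p' _ =>
          sum_congr rfl fun q' hq' => ?_
        rw [mem_range] at hq hq'
        exact ite_mul_add_eq_mul_add_add (by positivity) (by omega) (by positivity) (by omega)
          (Int.emod_nonneg _ (by omega)) (Int.emod_lt_of_pos _ (by omega)) _ _
    _ = _ := by simp only [diagSum, sum_mul_sum, ← sum_add_distrib]

theorem aCorr_eq_diagSum (L : ℕ) (a b : ℕ → ℂ) (u : ℤ) :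
    aCorr L a b u = diagSum L (fun i j => a i * conj (b j)) u := by
  rcases Int.eq_nat_or_neg u with ⟨n, rfl | rfl⟩
  · have (i j : ℕ) : (i : ℤ) = j + n ↔ j + n = i := by omega
    rw [diagSum, sum_comm]
    simp only [this, sum_ite_eq, aCorr, Nat.cast_nonneg, if_true, Int.toNat_natCast]
    exact sum_range_sub_eq_sum_ite L n _
  · have (i j : ℕ) : (i : ℤ) = j + -n ↔ i + n = j := by omega
    simp only [diagSum, this, sum_ite_eq, aCorr]
    split_ifs with h
    · obtain rfl : n = 0 := by omega
      simpa using sum_range_sub_eq_sum_ite L 0 fun i => a i * conj (b i)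
    · rw [neg_neg, Int.toNat_natCast]
      exact sum_range_sub_eq_sum_ite L n _

theorem codeCorr_eq_diagSum (M L : ℕ) (P Q : ℕ → ℕ → ℂ) (u : ℤ) :
    codeCorr M L P Q u = diagSum L (fun i j => ∑ ν ∈ range M, P ν i * conj (Q ν j)) u := by
  rw [diagSum_sum]
  exact sum_congr rfl fun ν _ => aCorr_eq_diagSum L (P ν) (Q ν) u

theorem codeCorr_eq_zero_of_le (M : ℕ) {L : ℕ} (P Q : ℕ → ℕ → ℂ) {u : ℤ} (h : L ≤ u.natAbs) :
    codeCorr M L P Q u = 0 := by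
  rw [codeCorr_eq_diagSum]
  exact diagSum_eq_zero_of_le _ h

theorem sum_kron_mul_conj (M M₁ L₁ : ℕ) (A B A' B' : ℕ → ℕ → ℂ) (i j : ℕ) :
    ∑ ν ∈ range (M * M₁), kron M₁ L₁ A B ν i * conj (kron M₁ L₁ A' B' ν j) =
      (∑ a ∈ range M, A a (i / L₁) * conj (A' a (j / L₁))) *
        ∑ b ∈ range M₁, B b (i % L₁) * conj (B' b (j % L₁)) := by
  rw [sum_range_mul, sum_mul_sum]
  refine sum_congr rfl fun a _ => sum_congr rfl fun b hb => ?_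
  rw [mem_range] at hb
  simp only [kron, Nat.mul_add_div_of_lt hb, Nat.mul_add_mod_of_lt hb, map_mul]
  ring

theorem codeCorr_kron (M M₁ L L₁ : ℕ) (A B A' B' : ℕ → ℕ → ℂ) (u : ℤ) :
    codeCorr (M * M₁) (L * L₁) (kron M₁ L₁ A B) (kron M₁ L₁ A' B') u =
      codeCorr M L A A' (u / L₁) * codeCorr M₁ L₁ B B' (u % L₁) +
        codeCorr M L A A' (u / L₁ + 1) * codeCorr M₁ L₁ B B' (u % L₁ - L₁) := by
  simp only [codeCorr_eq_diagSum, sum_kron_mul_conj]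
  exact diagSum_kron L L₁ (fun p p' => ∑ a ∈ range M, A a p * conj (A' a p'))
    (fun q q' => ∑ b ∈ range M₁, B b q * conj (B' b q')) u

section KroneckerVanishing

variable {M M₁ L L₁ : ℕ} {A B A' B' : ℕ → ℕ → ℂ}

theorem codeCorr_kron_eq_zero_of_left (hA : ∀ v, codeCorr M L A A' v = 0) (u : ℤ) :
    codeCorr (M * M₁) (L * L₁) (kron M₁ L₁ A B) (kron M₁ L₁ A' B') u = 0 := by
  rw [codeCorr_kron, hA, hA, zero_mul, zero_mul, add_zero]

theorem codeCorr_kron_eq_zero_of_right (hB : ∀ v, codeCorr M₁ L₁ B B' v = 0) (u : ℤ) :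
    codeCorr (M * M₁) (L * L₁) (kron M₁ L₁ A B) (kron M₁ L₁ A' B') u = 0 := by
  rw [codeCorr_kron, hB, hB, mul_zero, mul_zero, add_zero]

theorem codeCorr_kron_eq_zero_of_ne_zero (hA : ∀ v ≠ 0, codeCorr M L A A' v = 0)
    (hB : ∀ v ≠ 0, codeCorr M₁ L₁ B B' v = 0) {u : ℤ} (hu : u ≠ 0) :
    codeCorr (M * M₁) (L * L₁) (kron M₁ L₁ A B) (kron M₁ L₁ A' B') u = 0 := by
  have term_eq_zero (s t : ℤ) (hst : s * L₁ + t = u) :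
      codeCorr M L A A' s * codeCorr M₁ L₁ B B' t = 0 := by
    rcases eq_or_ne s 0 with rfl | hs
    · rw [hB t (by simpa [← hst] using hu), mul_zero]
    · rw [hA s hs, zero_mul]
  rw [codeCorr_kron, term_eq_zero _ _ (Int.ediv_mul_add_emod u L₁),
    term_eq_zero _ _ (by linear_combination Int.ediv_mul_add_emod u L₁), add_zero]

end KroneckerVanishing

theorem statement8_general (K M L K₁ M₁ L₁ : ℕ)
    (C : ℕ → ℕ → ℕ → ℂ) (D : ℕ → ℕ → ℕ → ℂ)
    (hCauto : ∀ μ < K, ∀ u : ℤ, u ≠ 0 → u.natAbs < L →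
      codeCorr M L (C μ) (C μ) u = 0)
    (hCcross : ∀ μ₁ < K, ∀ μ₂ < K, μ₁ ≠ μ₂ → ∀ u : ℤ, u.natAbs < L →
      codeCorr M L (C μ₁) (C μ₂) u = 0)
    (hDauto : ∀ ν < K₁, ∀ u : ℤ, u ≠ 0 → u.natAbs < L₁ →
      codeCorr M₁ L₁ (D ν) (D ν) u = 0)
    (hDcross : ∀ ν₁ < K₁, ∀ ν₂ < K₁, ν₁ ≠ ν₂ → ∀ u : ℤ, u.natAbs < L₁ →
      codeCorr M₁ L₁ (D ν₁) (D ν₂) u = 0) :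
    (∀ μ < K, ∀ ν < K₁, ∀ u : ℤ, u ≠ 0 → u.natAbs < L * L₁ →
      codeCorr (M * M₁) (L * L₁) (kron M₁ L₁ (C μ) (D ν)) (kron M₁ L₁ (C μ) (D ν)) u = 0) ∧
    (∀ μ < K, ∀ μ' < K, ∀ ν < K₁, ∀ ν' < K₁, (μ, ν) ≠ (μ', ν') →
      ∀ u : ℤ, u.natAbs < L * L₁ →
      codeCorr (M * M₁) (L * L₁) (kron M₁ L₁ (C μ) (D ν)) (kron M₁ L₁ (C μ') (D ν')) u = 0) := by
  have ofInRange {N ℓ : ℕ} {P Q : ℕ → ℕ → ℂ} {v : ℤ} (h : v.natAbs < ℓ → codeCorr N ℓ P Q v = 0) :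
      codeCorr N ℓ P Q v = 0 :=
    (lt_or_ge v.natAbs ℓ).elim h (codeCorr_eq_zero_of_le N P Q)
  refine ⟨fun μ hμ ν hν u hu _ => codeCorr_kron_eq_zero_of_ne_zero
      (fun v hv => ofInRange (hCauto μ hμ v hv)) (fun v hv => ofInRange (hDauto ν hν v hv)) hu,
    fun μ hμ μ' hμ' ν hν ν' hν' hne u _ => ?_⟩
  by_cases hμμ' : μ = μ'
  · subst hμμ'
    have hνν' : ν ≠ ν' := fun h => hne (h ▸ rfl)
    exact codeCorr_kron_eq_zero_of_right (fun v => ofInRange (hDcross ν hν ν' hν' hνν' v)) u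
  · exact codeCorr_kron_eq_zero_of_left (fun v => ofInRange (hCcross μ hμ μ' hμ' hμμ' v)) u

/-- the Kronecker product of a `(K,M,L)`-MOGCS with a `(K₁,M₁,L₁)`-MOGCS
is a family of `K·K₁` codes of size `(M·M₁) × (L·L₁)` whose autocorrelation sums vanish
for `0 < |u| < L·L₁` and whose cross-correlation sums vanish for all `|u| < L·L₁`. -/
theorem statement8 (K M L K₁ M₁ L₁ : ℕ) (hKM : K ≤ M) (hKM₁ : K₁ ≤ M₁)
    (C : ℕ → ℕ → ℕ → ℂ) (D : ℕ → ℕ → ℕ → ℂ)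
    (hCauto : ∀ μ < K, ∀ u : ℤ, u ≠ 0 → u.natAbs < L →
      codeCorr M L (C μ) (C μ) u = 0)
    (hCcross : ∀ μ₁ < K, ∀ μ₂ < K, μ₁ ≠ μ₂ → ∀ u : ℤ, u.natAbs < L →
      codeCorr M L (C μ₁) (C μ₂) u = 0)
    (hDauto : ∀ ν < K₁, ∀ u : ℤ, u ≠ 0 → u.natAbs < L₁ →
      codeCorr M₁ L₁ (D ν) (D ν) u = 0)
    (hDcross : ∀ ν₁ < K₁, ∀ ν₂ < K₁, ν₁ ≠ ν₂ → ∀ u : ℤ, u.natAbs < L₁ →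
      codeCorr M₁ L₁ (D ν₁) (D ν₂) u = 0) :
    (∀ μ < K, ∀ ν < K₁, ∀ u : ℤ, u ≠ 0 → u.natAbs < L * L₁ →
      codeCorr (M * M₁) (L * L₁) (kron M₁ L₁ (C μ) (D ν)) (kron M₁ L₁ (C μ) (D ν)) u = 0) ∧
    (∀ μ < K, ∀ μ' < K, ∀ ν < K₁, ∀ ν' < K₁, (μ, ν) ≠ (μ', ν') →
      ∀ u : ℤ, u.natAbs < L * L₁ →
      codeCorr (M * M₁) (L * L₁) (kron M₁ L₁ (C μ) (D ν)) (kron M₁ L₁ (C μ') (D ν')) u = 0) :=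
  statement8_general K M L K₁ M₁ L₁ C D hCauto hCcross hDauto hDcross
end

section
/- For every integer L ≥ 2 there exists a (K, K, L)-CCC whose entries all have modulus 1, where K = rad(L) is the product of the distinct primes dividing L: that is, there exist K complex matrices C_0,…,C_{K−1}, each of size K × L with unimodular entries, such that C(C_μ, C_μ)(0) = KL for all μ, C(C_μ, C_μ)(u) = 0 for all 0 < |u| < L, and C(C_{μ1}, C_{μ2})(u) = 0 for all |u| < L whenever μ1 ≠ μ2. -/
open Finset

/-- The radical of `L`: the product of the distinct primes dividing `L`. -/
def radN (L : ℕ) : ℕ := ∏ p ∈ L.primeFactors, p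

/-!
For a primitive `K`-th root of unity `ω`, the Fourier matrix `(ω ^ (μ r))` is a `(K,K,1)`-CCC.
If `B` is a `(K,K,L)`-CCC, interleave the `K` rows of `B_μ` into one sequence of length `KL` and
modulate it by `ω ^ (r n)`, `r < K`, to get the `K` rows of `C_μ`. Summing over `r` kills every
shift not divisible by `K`, and at a shift `K t` the interleaved correlation is the code
correlation of `B` at `t`; so `C` is a `(K,K,KL)`-CCC, and `(p,p,p^a)`-CCCs exist.

The Kronecker-type product of a `(K₁,K₁,L₁)`-CCC and a `(K₂,K₂,L₂)`-CCC is a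
`(K₁K₂,K₁K₂,L₁L₂)`-CCC: at a shift `v + L₁ t` with `v < L₁` its correlation is
`C₁(v) C₂(t)` plus a term proportional to `C₂(t + 1) = 0`. Multiplying the prime-power
constructions over the factorisation of `L` gives `K = rad L`.
-/

open ComplexConjugate

noncomputable def aCorrNat (L : ℕ) (a b : ℕ → ℂ) (w : ℕ) : ℂ :=
  ∑ i ∈ range (L - w), a (i + w) * conj (b i)

noncomputable def codeCorrNat (M L : ℕ) (C D : ℕ → ℕ → ℂ) (w : ℕ) : ℂ :=
  ∑ ν ∈ range M, aCorrNat L (C ν) (D ν) w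

/-- Only shifts `w ≥ 0` are recorded: the correlation at `-w` is the conjugate of the one at `w`
with the two codes swapped (`codeCorr_negSucc`). -/
structure IsUnimodularCCC (K L : ℕ) (C : ℕ → ℕ → ℕ → ℂ) : Prop where
  norm_eq_one : ∀ μ < K, ∀ r < K, ∀ n < L, ‖C μ r n‖ = 1
  codeCorrNat_eq : ∀ μ₁ < K, ∀ μ₂ < K, ∀ w < L,
    codeCorrNat K L (C μ₁) (C μ₂) w = if μ₁ = μ₂ ∧ w = 0 then (K : ℂ) * L else 0

theorem sum_range_mul_mod_div {M : Type*} [AddCommMonoid M] (m k : ℕ) (f : ℕ → ℕ → M) :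
    ∑ n ∈ range (m * k), f (n % m) (n / m) = ∑ i ∈ range m, ∑ j ∈ range k, f i j := by
  induction k with
  | zero => simp
  | succ k ih =>
    have hblock : ∀ i ∈ range m, f ((m * k + i) % m) ((m * k + i) / m) = f i k := by
      intro i hi
      have hi : i < m := mem_range.mp hi
      rw [Nat.mul_add_mod, Nat.mod_eq_of_lt hi, Nat.mul_add_div (by omega),
        Nat.div_eq_of_lt hi, add_zero]
    rw [Nat.mul_succ, sum_range_add, ih, sum_congr rfl hblock, ← sum_add_distrib]
    simp only [sum_range_succ]

theorem sum_range_mul_mod_div_mul {R : Type*} [NonUnitalNonAssocSemiring R] (m k : ℕ)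
    (f g : ℕ → R) :
    ∑ n ∈ range (m * k), f (n % m) * g (n / m) = (∑ i ∈ range m, f i) * ∑ j ∈ range k, g j := by
  rw [sum_range_mul_mod_div m k (fun i j => f i * g j), sum_mul_sum]

theorem sum_sum_range_mul_mod_div_mul {R : Type*} [NonUnitalNonAssocSemiring R] (m k : ℕ)
    (f g : ℕ → ℕ → R) :
    ∑ n ∈ range (m * k), ∑ n' ∈ range (m * k), f (n % m) (n' % m) * g (n / m) (n' / m)
      = (∑ i ∈ range m, ∑ i' ∈ range m, f i i') * ∑ j ∈ range k, ∑ j' ∈ range k, g j j' := by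
  rw [sum_range_mul_mod_div m k fun i j => ∑ n' ∈ range (m * k), f i (n' % m) * g j (n' / m),
    sum_mul_sum]
  simp only [sum_range_mul_mod_div_mul]

theorem geom_sum_eq_ite_of_pow_eq_one {R : Type*} [DivisionRing R] [DecidableEq R] {x : R} {K : ℕ}
    (hx : x ^ K = 1) : ∑ r ∈ range K, x ^ r = if x = 1 then (K : R) else 0 := by
  split_ifs with h
  · simp [h]
  · rw [geom_sum_eq h, hx, sub_self, zero_div]

theorem eq_add_add_mul_iff_mod_div {L v : ℕ} (hv : v < L) (n m t : ℕ) :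
    n = m + (v + L * t) ↔ (n % L = m % L + v ∧ n / L = m / L + t) ∨
      (n % L + L = m % L + v ∧ n / L = m / L + (t + 1)) := by
  have hn := Nat.mod_add_div n L
  have hm := Nat.mod_add_div m L
  have hn' := Nat.mod_lt n (by omega : 0 < L)
  have hm' := Nat.mod_lt m (by omega : 0 < L)
  generalize n % L = i, n / L = k, m % L = j, m / L = l at *
  subst hn hm
  constructor
  · intro h
    obtain hk | rfl | rfl | hk : k + 1 ≤ l + t ∨ k = l + t ∨ k = l + t + 1 ∨ l + t + 2 ≤ k := by
      omega
    · have := Nat.mul_le_mul_left L hk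
      rw [mul_add, mul_add, mul_one] at this
      omega
    · rw [mul_add] at h
      omega
    · rw [mul_add, mul_add, mul_one] at h
      omega
    · have := Nat.mul_le_mul_left L hk
      rw [mul_add, mul_add] at this
      omega
  · rintro (⟨h, rfl⟩ | ⟨h, rfl⟩) <;> simp only [mul_add, mul_one] <;> omega

theorem aCorrNat_eq_zero_of_le {L w : ℕ} (h : L ≤ w) (a b : ℕ → ℂ) : aCorrNat L a b w = 0 := by
  simp [aCorrNat, Nat.sub_eq_zero_of_le h]

theorem aCorrNat_eq_sum_sum_ite (L : ℕ) (a b : ℕ → ℂ) (w : ℕ) :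
    aCorrNat L a b w
      = ∑ i ∈ range L, ∑ j ∈ range L, if i = j + w then a i * conj (b j) else 0 := by
  rw [sum_comm]
  simp only [sum_ite_eq', mem_range, ← sum_filter]
  rw [aCorrNat]
  congr 1
  ext j
  simp only [mem_range, mem_filter]
  omega

theorem aCorrNat_pow_mul {x : ℂ} (hx : ‖x‖ = 1) (L : ℕ) (a b : ℕ → ℂ) (w : ℕ) :
    aCorrNat L (fun n => x ^ n * a n) (fun n => x ^ n * b n) w = x ^ w * aCorrNat L a b w := by
  have hx' : ∀ i : ℕ, (x * conj x) ^ i = 1 := fun i => by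
    rw [Complex.mul_conj', hx, Complex.ofReal_one, one_pow, one_pow]
  rw [aCorrNat, aCorrNat, mul_sum]
  refine sum_congr rfl fun i _ => ?_
  simp only [map_mul, map_pow]
  linear_combination (x ^ w * a (i + w) * conj (b i)) * hx' i

theorem aCorrNat_interleave {p : ℕ} (hp : 0 < p) (M t : ℕ) (B₁ B₂ : ℕ → ℕ → ℂ) :
    aCorrNat (p * M) (fun n => B₁ (n % p) (n / p)) (fun n => B₂ (n % p) (n / p)) (p * t)
      = codeCorrNat p M B₁ B₂ t := by
  simp only [aCorrNat, codeCorrNat, Nat.add_mul_mod_self_left, Nat.add_mul_div_left _ _ hp,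
    ← Nat.mul_sub]
  exact sum_range_mul_mod_div p (M - t) fun s k => B₁ s (k + t) * conj (B₂ s k)

/-- `n ↦ a (n % L₁) * c (n / L₁)` is `c` with each entry blown up to a scaled copy of `a`; the
second term collects the products of entries in adjacent blocks. -/
theorem aCorrNat_kron {L₁ v : ℕ} (hv : v < L₁) (L₂ t : ℕ) (a b c d : ℕ → ℂ) :
    aCorrNat (L₁ * L₂) (fun n => a (n % L₁) * c (n / L₁)) (fun n => b (n % L₁) * d (n / L₁))
        (v + L₁ * t)
      = aCorrNat L₁ a b v * aCorrNat L₂ c d t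
        + conj (aCorrNat L₁ b a (L₁ - v)) * aCorrNat L₂ c d (t + 1) := by
  have hboundary : conj (aCorrNat L₁ b a (L₁ - v))
      = ∑ i ∈ range L₁, ∑ j ∈ range L₁, if i + L₁ = j + v then a i * conj (b j) else 0 := by
    rw [aCorrNat_eq_sum_sum_ite, map_sum, sum_comm]
    refine sum_congr rfl fun i hi => ?_
    rw [map_sum]
    refine sum_congr rfl fun j hj => ?_
    have hidx : i = j + (L₁ - v) ↔ j + L₁ = i + v := by
      have := mem_range.mp hi
      have := mem_range.mp hj
      omega
    simp only [hidx, apply_ite conj, map_mul, Complex.conj_conj, map_zero, mul_comm]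
  rw [hboundary, aCorrNat_eq_sum_sum_ite, aCorrNat_eq_sum_sum_ite L₁, aCorrNat_eq_sum_sum_ite L₂,
    aCorrNat_eq_sum_sum_ite L₂, ← sum_sum_range_mul_mod_div_mul, ← sum_sum_range_mul_mod_div_mul,
    ← sum_add_distrib]
  refine sum_congr rfl fun n _ => ?_
  rw [← sum_add_distrib]
  refine sum_congr rfl fun m _ => ?_
  simp only [ite_zero_mul_ite_zero, eq_add_add_mul_iff_mod_div hv, map_mul]
  generalize n % L₁ = i, m % L₁ = j, n / L₁ = k, m / L₁ = l
  split_ifs <;> first | (exfalso; omega) | ring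

namespace IsUnimodularCCC

variable {K L : ℕ} {C : ℕ → ℕ → ℕ → ℂ}

theorem codeCorrNat_eq_zero (h : IsUnimodularCCC K L C) {μ₁ μ₂ : ℕ} (hμ₁ : μ₁ < K)
    (hμ₂ : μ₂ < K) {w : ℕ} (hw : w ≠ 0) : codeCorrNat K L (C μ₁) (C μ₂) w = 0 := by
  rcases lt_or_ge w L with hwL | hwL
  · rw [h.codeCorrNat_eq μ₁ hμ₁ μ₂ hμ₂ w hwL, if_neg fun h => hw h.2]
  · simp [codeCorrNat, aCorrNat_eq_zero_of_le hwL]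

theorem interleave {ω : ℂ} (hω : IsPrimitiveRoot ω K) (hC : IsUnimodularCCC K L C) :
    IsUnimodularCCC K (K * L) fun μ r n => ω ^ (r * n) * C μ (n % K) (n / K) where
  norm_eq_one μ hμ r hr n hn := by
    rw [norm_mul, norm_pow, hω.norm'_eq_one (by omega), one_pow, one_mul]
    exact hC.norm_eq_one μ hμ _ (Nat.mod_lt _ (by omega)) _ (Nat.div_lt_of_lt_mul hn)
  codeCorrNat_eq μ₁ hμ₁ μ₂ hμ₂ w hw := by
    have hK : 0 < K := by omega
    have hnorm : ∀ r, ‖ω ^ r‖ = 1 := fun r => by rw [norm_pow, hω.norm'_eq_one hK.ne', one_pow]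
    have hmodulate : codeCorrNat K (K * L) (fun r n => ω ^ (r * n) * C μ₁ (n % K) (n / K))
        (fun r n => ω ^ (r * n) * C μ₂ (n % K) (n / K)) w
        = (∑ r ∈ range K, (ω ^ w) ^ r) * aCorrNat (K * L)
          (fun n => C μ₁ (n % K) (n / K)) (fun n => C μ₂ (n % K) (n / K)) w := by
      simp only [codeCorrNat, pow_mul, aCorrNat_pow_mul (hnorm _), sum_mul]
      exact sum_congr rfl fun r _ => by ring
    rw [hmodulate, geom_sum_eq_ite_of_pow_eq_one (by rw [← pow_mul, mul_comm, pow_mul,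
      hω.pow_eq_one, one_pow])]
    by_cases hdvd : ω ^ w = 1
    · obtain ⟨t, rfl⟩ := (hω.pow_eq_one_iff_dvd w).mp hdvd
      rw [if_pos hdvd, aCorrNat_interleave hK,
        hC.codeCorrNat_eq μ₁ hμ₁ μ₂ hμ₂ t (Nat.lt_of_mul_lt_mul_left hw), mul_ite, mul_zero]
      exact if_congr (by simp [hK.ne']) (by push_cast; ring) rfl
    · rw [if_neg hdvd, zero_mul, if_neg fun h : μ₁ = μ₂ ∧ w = 0 => hdvd (h.2 ▸ pow_zero ω)]

theorem kron {K₁ L₁ K₂ L₂ : ℕ} {C D : ℕ → ℕ → ℕ → ℂ} (hC : IsUnimodularCCC K₁ L₁ C)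
    (hD : IsUnimodularCCC K₂ L₂ D) :
    IsUnimodularCCC (K₁ * K₂) (L₁ * L₂)
      fun μ r n => C (μ % K₁) (r % K₁) (n % L₁) * D (μ / K₁) (r / K₁) (n / L₁) where
  norm_eq_one μ hμ r hr n hn := by
    have hK₁ : 0 < K₁ := Nat.pos_of_mul_pos_right (by omega : 0 < K₁ * K₂)
    have hL₁ : 0 < L₁ := Nat.pos_of_mul_pos_right (by omega : 0 < L₁ * L₂)
    rw [norm_mul, hC.norm_eq_one _ (Nat.mod_lt _ hK₁) _ (Nat.mod_lt _ hK₁) _ (Nat.mod_lt _ hL₁),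
      hD.norm_eq_one _ (Nat.div_lt_of_lt_mul hμ) _ (Nat.div_lt_of_lt_mul hr) _
        (Nat.div_lt_of_lt_mul hn), one_mul]
  codeCorrNat_eq μ₁ hμ₁ μ₂ hμ₂ w hw := by
    have hK₁ : 0 < K₁ := Nat.pos_of_mul_pos_right (by omega : 0 < K₁ * K₂)
    have hL₁ : 0 < L₁ := Nat.pos_of_mul_pos_right (by omega : 0 < L₁ * L₂)
    obtain ⟨v, t, hv, ht, rfl⟩ : ∃ v t, v < L₁ ∧ t < L₂ ∧ w = v + L₁ * t :=
      ⟨w % L₁, w / L₁, Nat.mod_lt _ hL₁, Nat.div_lt_of_lt_mul hw, (Nat.mod_add_div w L₁).symm⟩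
    have hsplit : codeCorrNat (K₁ * K₂) (L₁ * L₂)
        (fun r n => C (μ₁ % K₁) (r % K₁) (n % L₁) * D (μ₁ / K₁) (r / K₁) (n / L₁))
        (fun r n => C (μ₂ % K₁) (r % K₁) (n % L₁) * D (μ₂ / K₁) (r / K₁) (n / L₁)) (v + L₁ * t)
        = codeCorrNat K₁ L₁ (C (μ₁ % K₁)) (C (μ₂ % K₁)) v
            * codeCorrNat K₂ L₂ (D (μ₁ / K₁)) (D (μ₂ / K₁)) t
          + (∑ s ∈ range K₁, conj (aCorrNat L₁ (C (μ₂ % K₁) s) (C (μ₁ % K₁) s) (L₁ - v)))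
            * codeCorrNat K₂ L₂ (D (μ₁ / K₁)) (D (μ₂ / K₁)) (t + 1) := by
      unfold codeCorrNat
      rw [← sum_range_mul_mod_div_mul, ← sum_range_mul_mod_div_mul, ← sum_add_distrib]
      exact sum_congr rfl fun r _ => aCorrNat_kron hv L₂ t _ _ _ _
    have hμ : μ₁ = μ₂ ↔ μ₁ % K₁ = μ₂ % K₁ ∧ μ₁ / K₁ = μ₂ / K₁ :=
      ⟨fun h => h ▸ ⟨rfl, rfl⟩, fun ⟨h₁, h₂⟩ => by
        rw [← Nat.mod_add_div μ₁ K₁, h₁, h₂, Nat.mod_add_div]⟩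
    rw [hsplit, hD.codeCorrNat_eq_zero (Nat.div_lt_of_lt_mul hμ₁) (Nat.div_lt_of_lt_mul hμ₂)
        t.succ_ne_zero, mul_zero, add_zero,
      hC.codeCorrNat_eq _ (Nat.mod_lt _ hK₁) _ (Nat.mod_lt _ hK₁) v hv,
      hD.codeCorrNat_eq _ (Nat.div_lt_of_lt_mul hμ₁) _ (Nat.div_lt_of_lt_mul hμ₂) t ht,
      ite_zero_mul_ite_zero]
    exact if_congr (by simp [hμ, hL₁.ne']; tauto) (by push_cast; ring) rfl

end IsUnimodularCCC

theorem isUnimodularCCC_dft {K : ℕ} {ω : ℂ} (hω : IsPrimitiveRoot ω K) :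
    IsUnimodularCCC K 1 fun μ r _ => ω ^ (μ * r) where
  norm_eq_one μ hμ r _ _ _ := by rw [norm_pow, hω.norm'_eq_one (by omega), one_pow]
  codeCorrNat_eq μ₁ hμ₁ μ₂ hμ₂ w hw := by
    obtain rfl : w = 0 := by omega
    have hconj : conj (ω ^ μ₂) = (ω ^ μ₂)⁻¹ := by
      rw [Complex.inv_eq_conj (by rw [norm_pow, hω.norm'_eq_one (by omega), one_pow])]
    have hsum : codeCorrNat K 1 (fun r _ => ω ^ (μ₁ * r)) (fun r _ => ω ^ (μ₂ * r)) 0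
        = ∑ r ∈ range K, (ω ^ μ₁ * (ω ^ μ₂)⁻¹) ^ r := by
      simp only [codeCorrNat, aCorrNat, Nat.sub_zero, sum_range_one, pow_mul, map_pow, hconj,
        mul_pow, inv_pow]
    have hroot : (ω ^ μ₁ * (ω ^ μ₂)⁻¹) ^ K = 1 := by
      rw [mul_pow, inv_pow, ← pow_mul, ← pow_mul, pow_mul', pow_mul', hω.pow_eq_one, one_pow,
        one_pow, inv_one, mul_one]
    have hne : ω ^ μ₂ ≠ 0 := pow_ne_zero _ (hω.ne_zero (by omega))
    rw [hsum, geom_sum_eq_ite_of_pow_eq_one hroot]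
    refine if_congr ?_ (by simp) rfl
    rw [mul_inv_eq_one₀ hne]
    exact ⟨fun h => ⟨hω.pow_inj hμ₁ hμ₂ h, rfl⟩, fun h => h.1 ▸ rfl⟩

theorem exists_isUnimodularCCC_pow {K : ℕ} {ω : ℂ} (hω : IsPrimitiveRoot ω K) :
    ∀ a : ℕ, ∃ C, IsUnimodularCCC K (K ^ a) C
  | 0 => ⟨_, isUnimodularCCC_dft hω⟩
  | a + 1 =>
    let ⟨_, hC⟩ := exists_isUnimodularCCC_pow hω a
    ⟨_, pow_succ' K a ▸ hC.interleave hω⟩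

theorem radN_prime_pow {p n : ℕ} (hp : p.Prime) (hn : n ≠ 0) : radN (p ^ n) = p := by
  rw [radN, Nat.primeFactors_prime_pow hn hp, prod_singleton]

theorem Nat.Coprime.radN_mul {a b : ℕ} (hab : a.Coprime b) : radN (a * b) = radN a * radN b := by
  rw [radN, radN, radN, hab.primeFactors_mul, prod_union hab.disjoint_primeFactors]

theorem exists_isUnimodularCCC_radN (L : ℕ) : ∃ C, IsUnimodularCCC (radN L) L C := by
  induction L using Nat.recOnPosPrimePosCoprime with
  | prime_pow p n hp hn =>
    rw [radN_prime_pow hp hn.ne']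
    exact exists_isUnimodularCCC_pow (Complex.isPrimitiveRoot_exp p hp.ne_zero) n
  | zero => exact ⟨fun _ _ _ => 1, by simp, by simp⟩
  | one =>
    rw [show radN 1 = 1 by simp [radN]]
    exact ⟨_, isUnimodularCCC_dft IsPrimitiveRoot.one⟩
  | coprime a b _ _ hab ha hb =>
    obtain ⟨C, hC⟩ := ha
    obtain ⟨D, hD⟩ := hb
    rw [hab.radN_mul]
    exact ⟨_, hC.kron hD⟩

theorem codeCorr_natCast_s12 (M L : ℕ) (C D : ℕ → ℕ → ℂ) (w : ℕ) :
    codeCorr M L C D w = codeCorrNat M L C D w := by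
  simp [codeCorr, codeCorrNat, aCorr, aCorrNat]

theorem codeCorr_negSucc (M L : ℕ) (C D : ℕ → ℕ → ℂ) (w : ℕ) :
    codeCorr M L C D (Int.negSucc w) = conj (codeCorrNat M L D C (w + 1)) := by
  rw [codeCorr, codeCorrNat, map_sum]
  refine sum_congr rfl fun ν _ => ?_
  rw [aCorr, if_neg (Int.negSucc_lt_zero w).not_ge, aCorrNat, map_sum]
  refine sum_congr rfl fun i _ => ?_
  simp [mul_comm]

theorem IsUnimodularCCC.codeCorr_eq {K L : ℕ} {C : ℕ → ℕ → ℕ → ℂ} (h : IsUnimodularCCC K L C)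
    {μ₁ μ₂ : ℕ} (hμ₁ : μ₁ < K) (hμ₂ : μ₂ < K) {u : ℤ} (hu : u.natAbs < L) :
    codeCorr K L (C μ₁) (C μ₂) u = if μ₁ = μ₂ ∧ u = 0 then (K : ℂ) * L else 0 := by
  cases u with
  | ofNat w =>
    rw [Int.ofNat_eq_natCast, codeCorr_natCast_s12, h.codeCorrNat_eq μ₁ hμ₁ μ₂ hμ₂ w hu]
    simp only [Nat.cast_eq_zero]
  | negSucc w =>
    rw [codeCorr_negSucc, h.codeCorrNat_eq_zero hμ₂ hμ₁ w.succ_ne_zero, map_zero,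
      if_neg fun h => nomatch h.2]

/-- for every `L ≥ 2` there is a `(K,K,L)`-CCC with unimodular entries,
where `K = rad(L)` is the product of the distinct primes dividing `L`. -/
theorem statement12 (L : ℕ) (hL : 2 ≤ L) :
    ∃ C : ℕ → ℕ → ℕ → ℂ,
      (∀ μ < radN L, ∀ r < radN L, ∀ n < L, ‖C μ r n‖ = 1) ∧
      (∀ μ < radN L, codeCorr (radN L) L (C μ) (C μ) 0 = ((radN L : ℕ) : ℂ) * (L : ℂ)) ∧
      (∀ μ < radN L, ∀ u : ℤ, u ≠ 0 → u.natAbs < L →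
        codeCorr (radN L) L (C μ) (C μ) u = 0) ∧
      (∀ μ₁ < radN L, ∀ μ₂ < radN L, μ₁ ≠ μ₂ → ∀ u : ℤ, u.natAbs < L →
        codeCorr (radN L) L (C μ₁) (C μ₂) u = 0) := by
  obtain ⟨C, hC⟩ := exists_isUnimodularCCC_radN L
  refine ⟨C, hC.norm_eq_one, fun μ hμ => ?_, fun μ hμ u hu₀ hu => ?_,
    fun μ₁ hμ₁ μ₂ hμ₂ hne u hu => ?_⟩
  · rw [hC.codeCorr_eq hμ hμ (by omega), if_pos ⟨rfl, rfl⟩]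
  · rw [hC.codeCorr_eq hμ hμ hu, if_neg fun h => hu₀ h.2]
  · rw [hC.codeCorr_eq hμ₁ hμ₂ hu, if_neg fun h => hne h.1]
end
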